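/- arXiv:2404.03269 — 11 statements merged into one kernel-verified Lean document; each statement's English description precedes it below -/
import Mathlib

section
/- If g is a pseudo-metric on W compatible with (ḡ, γ, θ), then dim V ≤ dim(ker g) ≤ dim Vert. Moreover, if dim Vert = dim V, then ker g is exactly the range of γ − θ : V → W. -/
/-- (Kernel of a compatible pseudo-metric, pointwise form.)
If `g` is a pseudo-metric on `W` compatible with `(ḡ, γ, θ)` then
`dim V ≤ dim (ker g) ≤ dim Vert` (with `Vert = ker π`), and if `dim Vert = dim V` then
`ker g` is exactly the range of `γ − θ`. -/
theorem stmt3 (V W : Type*)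
    [AddCommGroup V] [Module ℝ V] [FiniteDimensional ℝ V]
    [AddCommGroup W] [Module ℝ W] [FiniteDimensional ℝ W]
    (π : W →ₗ[ℝ] V) (hπ : Function.Surjective π)
    (γ : V →ₗ[ℝ] W) (hγ : π ∘ₗ γ = LinearMap.id)
    (θ : V →ₗ[ℝ] W) (hθinj : Function.Injective θ)
    (hθrange : LinearMap.range θ ≤ LinearMap.ker π)
    (gbar : V →ₗ[ℝ] V →ₗ[ℝ] ℝ)
    (hgbarsymm : ∀ u w : V, gbar u w = gbar w u)
    (hgbarposdef : ∀ v : V, v ≠ 0 → 0 < gbar v v)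
    (g : W →ₗ[ℝ] W →ₗ[ℝ] ℝ)
    (hgsymm : ∀ u w : W, g u w = g w u)
    (hgpos : ∀ u : W, 0 ≤ g u u)
    (hcompat : ∀ u w u' w' : V,
      g (θ u + γ w) (θ u' + γ w') = gbar (u + w) (u' + w')) :
    Module.finrank ℝ V ≤ Module.finrank ℝ (LinearMap.ker g) ∧
    Module.finrank ℝ (LinearMap.ker g) ≤ Module.finrank ℝ (LinearMap.ker π) ∧
    (Module.finrank ℝ (LinearMap.ker π) = Module.finrank ℝ V →
      LinearMap.ker g = LinearMap.range (γ - θ)) := by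
  have hπγ : ∀ v : V, π (γ v) = v := by
    intro v
    have := LinearMap.ext_iff.mp hγ v
    simpa using this
  -- Cauchy-Schwarz null vector lemma
  have keyzero : ∀ x : W, g x x = 0 → ∀ y : W, g x y = 0 := by
    intro x hx y
    set a := g x y with ha
    set b := g y y with hb
    have hbnn : 0 ≤ b := hgpos y
    have h : ∀ t : ℝ, 0 ≤ 2 * t * a + t ^ 2 * b := by
      intro t
      have h1 := hgpos (x + t • y)
      have h2 : g (x + t • y) (x + t • y) = g x x + 2 * t * a + t ^ 2 * b := by
        simp only [map_add, map_smul, LinearMap.add_apply, LinearMap.smul_apply,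
          smul_eq_mul, ha, hb]
        rw [hgsymm y x]
        ring
      rw [h2, hx] at h1
      linarith
    rcases eq_or_lt_of_le hbnn with hb0 | hb0
    · have := h (-a)
      nlinarith [sq_nonneg a]
    · have h' := h (-a / b)
      have hb' : b ≠ 0 := ne_of_gt hb0
      have heq : 2 * (-a / b) * a + (-a / b) ^ 2 * b = -(a ^ 2) / b := by
        field_simp
        ring
      rw [heq] at h'
      have h1 : a ^ 2 / b ≤ 0 := by
        have : -(a ^ 2 / b) = -(a ^ 2) / b := by ring
        linarith [h', this.symm ▸ h']
      have h2 : a ^ 2 ≤ 0 := by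
        rcases div_nonpos_iff.mp h1 with ⟨h3, h4⟩ | ⟨h3, h4⟩
        · linarith
        · exact h3
      have h3 : a ^ 2 = 0 := le_antisymm h2 (sq_nonneg a)
      exact pow_eq_zero_iff two_ne_zero |>.mp h3
  -- range (γ - θ) ⊆ ker g
  have hsub : LinearMap.range (γ - θ) ≤ LinearMap.ker g := by
    rintro _ ⟨v, rfl⟩
    have heq : (γ - θ) v = θ (-v) + γ v := by
      simp [LinearMap.sub_apply]
      abel
    have hself : g ((γ - θ) v) ((γ - θ) v) = 0 := by
      rw [heq, hcompat]
      simp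
    rw [LinearMap.mem_ker]
    ext y
    simpa using keyzero _ hself y
  -- γ - θ injective
  have hinj : Function.Injective (γ - θ) := by
    rw [← LinearMap.ker_eq_bot, eq_bot_iff]
    intro v hv
    rw [LinearMap.mem_ker, LinearMap.sub_apply, sub_eq_zero] at hv
    have h1 : π (γ v) = 0 := by
      rw [hv]
      exact hθrange ⟨v, rfl⟩
    rw [hπγ] at h1
    simpa using h1
  have hrkV : Module.finrank ℝ (LinearMap.range (γ - θ)) = Module.finrank ℝ V :=
    LinearMap.finrank_range_of_inj hinj
  refine ⟨?_, ?_, ?_⟩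
  · rw [← hrkV]
    exact Submodule.finrank_mono hsub
  · -- ker g ⊓ range γ = ⊥
    have hdisj : LinearMap.ker g ⊓ LinearMap.range γ = ⊥ := by
      rw [eq_bot_iff]
      rintro x ⟨hk, v, rfl⟩
      have hgv : g (γ v) (γ v) = 0 := by
        rw [SetLike.mem_coe, LinearMap.mem_ker] at hk
        rw [hk]
        simp
      have hc := hcompat 0 v 0 v
      simp at hc
      rw [hgv] at hc
      have hv0 : v = 0 := by
        by_contra hne
        have := hgbarposdef v hne
        linarith [hc]
      simp [hv0]
    have hγinj : Function.Injective γ := Function.LeftInverse.injective hπγ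
    have hrkγ : Module.finrank ℝ (LinearMap.range γ) = Module.finrank ℝ V :=
      LinearMap.finrank_range_of_inj hγinj
    have hsup := Submodule.finrank_sup_add_finrank_inf_eq (LinearMap.ker g) (LinearMap.range γ)
    rw [hdisj] at hsup
    simp at hsup
    have hle : Module.finrank ℝ ↥(LinearMap.ker g ⊔ LinearMap.range γ) ≤ Module.finrank ℝ W :=
      Submodule.finrank_le _
    have hrn := LinearMap.finrank_range_add_finrank_ker π
    have hrπ : Module.finrank ℝ (LinearMap.range π) = Module.finrank ℝ V := by
      rw [LinearMap.range_eq_top.mpr hπ]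
      exact finrank_top ℝ V
    omega
  · intro hdim
    have hθrk : Module.finrank ℝ (LinearMap.range θ) = Module.finrank ℝ (LinearMap.ker π) := by
      rw [LinearMap.finrank_range_of_inj hθinj, hdim]
    have hθeq : LinearMap.range θ = LinearMap.ker π :=
      Submodule.eq_of_le_of_finrank_eq hθrange hθrk
    refine le_antisymm ?_ hsub
    intro x hx
    set w := π x with hw
    have hker : x - γ w ∈ LinearMap.ker π := by
      rw [LinearMap.mem_ker, map_sub, hπγ, sub_self]
    rw [← hθeq] at hker
    obtain ⟨u, hu⟩ := hker
    have hxeq : x = θ u + γ w := by rw [hu]; abel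
    have hz : g x (θ (u + w) + γ 0) = 0 := by
      rw [LinearMap.mem_ker] at hx
      rw [hx]
      simp
    rw [hxeq, hcompat] at hz
    rw [add_zero] at hz
    have huw : u + w = 0 := by
      by_contra hne
      have := hgbarposdef _ hne
      linarith [hz]
    have hu' : u = -w := eq_neg_of_add_eq_zero_left huw
    refine ⟨w, ?_⟩
    rw [hxeq, hu', LinearMap.sub_apply, map_neg]
    abel
end

section
/- For every horizontal lift γ : V₂ → W₂ of π₂, the range of γ ∘ F̄ is contained in the range of F, so that Γ := F⁻¹ ∘ γ ∘ F̄ : V₁ → W₁ is a well-defined linear map; Γ is the unique linear map satisfying π₁ ∘ Γ = id and F ∘ Γ = γ ∘ F̄, hence Γ is a horizontal lift of π₁ (the pull-back connection). Moreover range Γ = F⁻¹(range γ), and the horizontal projections satisfy F ∘ (Γ ∘ π₁) = (γ ∘ π₂) ∘ F. -/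
/-- (Pull-back connection, pointwise form.) In the placement setting
(`π₁, π₂` surjective with equal vertical dimensions, `F, F̄` injective with
`π₂ ∘ F = F̄ ∘ π₁`), for every horizontal lift `γ` of `π₂` the range of `γ ∘ F̄` is
contained in the range of `F`; there is a unique linear `Γ` with `F ∘ Γ = γ ∘ F̄`
(so `Γ = F⁻¹ ∘ γ ∘ F̄` is well defined), and any such `Γ` satisfies `π₁ ∘ Γ = id`
(it is a horizontal lift of `π₁`), `range Γ = F⁻¹(range γ)`, and
`F ∘ (Γ ∘ π₁) = (γ ∘ π₂) ∘ F`. -/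
theorem stmt4 (V₁ W₁ V₂ W₂ : Type*)
    [AddCommGroup V₁] [Module ℝ V₁] [FiniteDimensional ℝ V₁]
    [AddCommGroup W₁] [Module ℝ W₁] [FiniteDimensional ℝ W₁]
    [AddCommGroup V₂] [Module ℝ V₂] [FiniteDimensional ℝ V₂]
    [AddCommGroup W₂] [Module ℝ W₂] [FiniteDimensional ℝ W₂]
    (π₁ : W₁ →ₗ[ℝ] V₁) (hπ₁ : Function.Surjective π₁)
    (π₂ : W₂ →ₗ[ℝ] V₂) (hπ₂ : Function.Surjective π₂)
    (hdim : Module.finrank ℝ (LinearMap.ker π₁) = Module.finrank ℝ (LinearMap.ker π₂))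
    (F : W₁ →ₗ[ℝ] W₂) (hF : Function.Injective F)
    (Fbar : V₁ →ₗ[ℝ] V₂) (hFbar : Function.Injective Fbar)
    (hcomm : π₂ ∘ₗ F = Fbar ∘ₗ π₁)
    (γ : V₂ →ₗ[ℝ] W₂) (hγ : π₂ ∘ₗ γ = LinearMap.id) :
    (∀ v : V₁, γ (Fbar v) ∈ LinearMap.range F) ∧
    (∃! Γ : V₁ →ₗ[ℝ] W₁, F ∘ₗ Γ = γ ∘ₗ Fbar) ∧
    (∀ Γ : V₁ →ₗ[ℝ] W₁, F ∘ₗ Γ = γ ∘ₗ Fbar →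
      π₁ ∘ₗ Γ = LinearMap.id ∧
      LinearMap.range Γ = Submodule.comap F (LinearMap.range γ) ∧
      F ∘ₗ (Γ ∘ₗ π₁) = (γ ∘ₗ π₂) ∘ₗ F) := by
  -- F maps ker π₁ onto ker π₂
  have hmaple : (LinearMap.ker π₁).map F ≤ LinearMap.ker π₂ := by
    rintro _ ⟨w, hw, rfl⟩
    have : π₂ (F w) = Fbar (π₁ w) := LinearMap.congr_fun hcomm w
    simp [LinearMap.mem_ker] at *
    simp [this, hw]
  have hker : (LinearMap.ker π₁).map F = LinearMap.ker π₂ := by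
    apply Submodule.eq_of_le_of_finrank_eq hmaple
    rw [← (Submodule.equivMapOfInjective F hF (LinearMap.ker π₁)).finrank_eq]
    exact hdim
  have hcomm' : ∀ w, π₂ (F w) = Fbar (π₁ w) := fun w =>
    LinearMap.congr_fun hcomm w
  have hγ' : ∀ v, π₂ (γ v) = v := fun v => LinearMap.congr_fun hγ v
  have hmem : ∀ v : V₁, γ (Fbar v) ∈ LinearMap.range F := by
    intro v
    obtain ⟨w, rfl⟩ := hπ₁ v
    have h1 : γ (Fbar (π₁ w)) - F w ∈ LinearMap.ker π₂ := by
      simp [LinearMap.mem_ker, hcomm' w, hγ']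
    rw [← hker] at h1
    obtain ⟨k, _, hk⟩ := h1
    exact ⟨k + w, by rw [map_add, hk]; abel⟩
  refine ⟨hmem, ?_, ?_⟩
  · -- existence & uniqueness
    let e := LinearEquiv.ofInjective F hF
    let g : V₁ →ₗ[ℝ] LinearMap.range F :=
      (γ ∘ₗ Fbar).codRestrict (LinearMap.range F) hmem
    refine ⟨e.symm.toLinearMap ∘ₗ g, ?_, ?_⟩
    · ext v
      have : (e (e.symm (g v)) : W₂) = g v := by rw [e.apply_symm_apply]
      simpa [e, g, LinearEquiv.ofInjective_apply] using this
    · intro Γ' hΓ'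
      ext v
      apply hF
      have h1 : F (Γ' v) = γ (Fbar v) := LinearMap.congr_fun hΓ' v
      have : (e (e.symm (g v)) : W₂) = g v := by rw [e.apply_symm_apply]
      rw [h1]
      simpa [e, g, LinearEquiv.ofInjective_apply] using this.symm
  · intro Γ hΓ
    have hΓ' : ∀ v, F (Γ v) = γ (Fbar v) := fun v => LinearMap.congr_fun hΓ v
    have hlift : ∀ v, π₁ (Γ v) = v := by
      intro v
      apply hFbar
      rw [← hcomm', hΓ', hγ']
    refine ⟨by ext v; simp [hlift], ?_, ?_⟩
    · apply le_antisymm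
      · rintro _ ⟨v, rfl⟩
        simp [Submodule.mem_comap, hΓ' v]
      · rintro w hw
        obtain ⟨u, hu⟩ := hw
        have hu' : u = Fbar (π₁ w) := by
          rw [← hγ' u, hu, hcomm']
        refine ⟨π₁ w, hF ?_⟩
        rw [hΓ', ← hu', hu]
    · ext w
      simp [hΓ', hcomm']
end

section
/- (i) For any symmetric positive-semidefinite bilinear form g on a real vector space W₂ and any linear map F : W₁ → W₂, the pull-back form (F*g)(u, w) := g(Fu, Fw) satisfies ker(F*g) = F⁻¹(ker g), where ker denotes the kernel of the form. (ii) In the pull-back setting, if moreover dim ker π₂ = dim V₂ and g is compatible with (ḡ, γ, θ), then the kernel of the pulled-back pseudo-metric G = F*g equals the range of Γ − Θ : V₁ → W₁, where Γ = F⁻¹ ∘ γ ∘ F̄ and Θ = F⁻¹ ∘ θ ∘ F̄. -/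
theorem psd_ker_aux {W : Type*} [AddCommGroup W] [Module ℝ W]
    (g : W →ₗ[ℝ] W →ₗ[ℝ] ℝ) (hsymm : ∀ u w, g u w = g w u)
    (hpos : ∀ u, 0 ≤ g u u) (x : W) (hx : g x x = 0) : ∀ y, g x y = 0 := by
  intro y
  have h : ∀ t : ℝ, 0 ≤ g y y * (t * t) + (2 * g x y) * t + 0 := by
    intro t
    have h2 := hpos (x + t • y)
    have : g (x + t • y) (x + t • y)
        = g x x + t * g x y + t * g y x + t * (t * g y y) := by
      simp [map_add, map_smul]
      ring
    rw [this, hx, hsymm y x] at h2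
    nlinarith [h2]
  have hd := discrim_le_zero h
  simp only [discrim] at hd
  nlinarith [hd]

theorem pullback_ker_aux {W₁' W₂' : Type*} [AddCommGroup W₁'] [Module ℝ W₁']
    [AddCommGroup W₂'] [Module ℝ W₂']
    (g' : W₂' →ₗ[ℝ] W₂' →ₗ[ℝ] ℝ)
    (hs : ∀ u w : W₂', g' u w = g' w u)
    (hp : ∀ u : W₂', 0 ≤ g' u u)
    (F' : W₁' →ₗ[ℝ] W₂') :
    LinearMap.ker (g'.compl₁₂ F' F') = Submodule.comap F' (LinearMap.ker g') := by
  ext x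
  simp only [LinearMap.mem_ker, Submodule.mem_comap]
  constructor
  · intro h
    have h' : ∀ y, g' (F' x) (F' y) = 0 := by
      intro y
      have := LinearMap.congr_fun h y
      simpa [LinearMap.compl₁₂_apply] using this
    apply LinearMap.ext
    intro y
    exact psd_ker_aux g' hs hp (F' x) (h' x) y
  · intro h
    apply LinearMap.ext
    intro y
    have := LinearMap.congr_fun h (F' y)
    simpa [LinearMap.compl₁₂_apply] using this



/-- (i) For any symmetric positive-semidefinite bilinear form `g'` on a
real vector space `W₂'` and any linear map `F' : W₁' → W₂'`, the pull-back form
`F'*g' = g'.compl₁₂ F' F'` satisfies `ker (F'*g') = F'⁻¹ (ker g')`.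
(ii) In the pull-back setting, if `dim (ker π₂) = dim V₂` and `g` is compatible with
`(ḡ, γ, θ)`, then the kernel of the pulled-back pseudo-metric `G = F*g` equals the range
of `Γ − Θ`, where `Γ` and `Θ` are the pull-backs of `γ` and `θ` (characterised by
`F ∘ Γ = γ ∘ F̄` and `F ∘ Θ = θ ∘ F̄`). -/
theorem stmt7 (V₁ W₁ V₂ W₂ : Type*)
    [AddCommGroup V₁] [Module ℝ V₁] [FiniteDimensional ℝ V₁]
    [AddCommGroup W₁] [Module ℝ W₁] [FiniteDimensional ℝ W₁]
    [AddCommGroup V₂] [Module ℝ V₂] [FiniteDimensional ℝ V₂]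
    [AddCommGroup W₂] [Module ℝ W₂] [FiniteDimensional ℝ W₂]
    (π₁ : W₁ →ₗ[ℝ] V₁) (hπ₁ : Function.Surjective π₁)
    (π₂ : W₂ →ₗ[ℝ] V₂) (hπ₂ : Function.Surjective π₂)
    (hdim : Module.finrank ℝ (LinearMap.ker π₁) = Module.finrank ℝ (LinearMap.ker π₂))
    (hdim2 : Module.finrank ℝ (LinearMap.ker π₂) = Module.finrank ℝ V₂)
    (F : W₁ →ₗ[ℝ] W₂) (hF : Function.Injective F)
    (Fbar : V₁ →ₗ[ℝ] V₂) (hFbar : Function.Injective Fbar)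
    (hcomm : π₂ ∘ₗ F = Fbar ∘ₗ π₁)
    (γ : V₂ →ₗ[ℝ] W₂) (hγ : π₂ ∘ₗ γ = LinearMap.id)
    (θ : V₂ →ₗ[ℝ] W₂) (hθinj : Function.Injective θ) (hθ : π₂ ∘ₗ θ = 0)
    (gbar : V₂ →ₗ[ℝ] V₂ →ₗ[ℝ] ℝ)
    (hgbarsymm : ∀ u w : V₂, gbar u w = gbar w u)
    (hgbarposdef : ∀ v : V₂, v ≠ 0 → 0 < gbar v v)
    (g : W₂ →ₗ[ℝ] W₂ →ₗ[ℝ] ℝ)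
    (hgsymm : ∀ u w : W₂, g u w = g w u)
    (hgpos : ∀ u : W₂, 0 ≤ g u u)
    (hcompat : ∀ u w u' w' : V₂,
      g (θ u + γ w) (θ u' + γ w') = gbar (u + w) (u' + w'))
    (Γ : V₁ →ₗ[ℝ] W₁) (hΓ : F ∘ₗ Γ = γ ∘ₗ Fbar)
    (Θ : V₁ →ₗ[ℝ] W₁) (hΘ : F ∘ₗ Θ = θ ∘ₗ Fbar) :
    -- (i) general statement about kernels of pulled-back forms
    (∀ (W₁' W₂' : Type) [AddCommGroup W₁'] [Module ℝ W₁']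
        [AddCommGroup W₂'] [Module ℝ W₂']
        (g' : W₂' →ₗ[ℝ] W₂' →ₗ[ℝ] ℝ),
      (∀ u w : W₂', g' u w = g' w u) →
      (∀ u : W₂', 0 ≤ g' u u) →
      ∀ F' : W₁' →ₗ[ℝ] W₂',
        LinearMap.ker (g'.compl₁₂ F' F') = Submodule.comap F' (LinearMap.ker g')) ∧
    -- (ii) kernel of the pulled-back pseudo-metric in the placement setting
    LinearMap.ker (g.compl₁₂ F F) = LinearMap.range (Γ - Θ) := by
  constructor
  · intro W₁' W₂' _ _ _ _ g' hs hp F'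
    exact pullback_ker_aux g' hs hp F'
  · -- range θ = ker π₂
    have hθmem : ∀ v, θ v ∈ LinearMap.ker π₂ := by
      intro v
      have := LinearMap.congr_fun hθ v
      simpa using this
    have hθrange : LinearMap.range θ = LinearMap.ker π₂ := by
      set θ' : V₂ →ₗ[ℝ] LinearMap.ker π₂ := θ.codRestrict _ hθmem with hθ'
      have hinj' : Function.Injective θ' := by
        intro a b h
        exact hθinj (congrArg Subtype.val h)
      have hsurj : Function.Surjective θ' :=
        (LinearMap.injective_iff_surjective_of_finrank_eq_finrank hdim2.symm).mp hinj'
      apply le_antisymm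
      · rintro _ ⟨v, rfl⟩; exact hθmem v
      · rintro w hw
        obtain ⟨v, hv⟩ := hsurj ⟨w, hw⟩
        exact ⟨v, congrArg Subtype.val hv⟩
    have hγsec : ∀ v, π₂ (γ v) = v := fun v => by
      simpa using LinearMap.congr_fun hγ v
    have hdecomp : ∀ w : W₂, ∃ u v, w = θ u + γ v := by
      intro w
      have hmem : w - γ (π₂ w) ∈ LinearMap.ker π₂ := by
        simp [LinearMap.mem_ker, map_sub, hγsec]
      rw [← hθrange] at hmem
      obtain ⟨u, hu⟩ := hmem
      refine ⟨u, π₂ w, ?_⟩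
      rw [hu]; abel
    -- kernel of g
    have hkerg : ∀ x : W₂, g x = 0 ↔ ∃ v, x = γ v - θ v := by
      intro x
      constructor
      · intro hx
        obtain ⟨u, v, rfl⟩ := hdecomp x
        have h0 : g (θ u + γ v) (θ (u + v) + γ 0) = 0 := by
          rw [hx]; rfl
        rw [hcompat] at h0
        have huv : u + v = 0 := by
          by_contra hne
          have := hgbarposdef (u + v) hne
          rw [show u + v + 0 = u + v by abel] at h0
          linarith
        have hu : u = -v := by
          have : u = u + v - v := by abel
          rw [this, huv]; abel
        refine ⟨v, ?_⟩
        rw [hu, map_neg]; abel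
      · rintro ⟨v, rfl⟩
        apply LinearMap.ext
        intro y
        obtain ⟨u', v', rfl⟩ := hdecomp y
        have : γ v - θ v = θ (-v) + γ v := by rw [map_neg]; abel
        rw [LinearMap.zero_apply, this, hcompat]
        rw [show -v + v = (0 : V₂) by abel]
        simp
    rw [pullback_ker_aux g hgsymm hgpos F]
    ext x
    simp only [Submodule.mem_comap, LinearMap.mem_ker, LinearMap.mem_range]
    constructor
    · intro hx
      obtain ⟨v, hv⟩ := (hkerg (F x)).mp hx
      have hv2 : Fbar (π₁ x) = v := by
        have h1 : π₂ (F x) = Fbar (π₁ x) := LinearMap.congr_fun hcomm x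
        have h2 : π₂ (γ v - θ v) = v := by
          have := hθmem v
          simp only [LinearMap.mem_ker] at this
          simp [map_sub, hγsec, this]
        rw [hv] at h1
        rw [← h1, h2]
      refine ⟨π₁ x, hF ?_⟩
      have hFΓΘ : F ((Γ - Θ) (π₁ x)) = γ (Fbar (π₁ x)) - θ (Fbar (π₁ x)) := by
        have e1 : F (Γ (π₁ x)) = γ (Fbar (π₁ x)) := by
          simpa using LinearMap.congr_fun hΓ (π₁ x)
        have e2 : F (Θ (π₁ x)) = θ (Fbar (π₁ x)) := by
          simpa using LinearMap.congr_fun hΘ (π₁ x)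
        simp only [LinearMap.sub_apply, map_sub, e1, e2]
      rw [hFΓΘ, hv2, ← hv]
    · rintro ⟨v, rfl⟩
      apply (hkerg _).mpr
      refine ⟨Fbar v, ?_⟩
      have e1 : F (Γ v) = γ (Fbar v) := by
        simpa using LinearMap.congr_fun hΓ v
      have e2 : F (Θ v) = θ (Fbar v) := by
        simpa using LinearMap.congr_fun hΘ v
      simp only [LinearMap.sub_apply, map_sub, e1, e2]
end

section
/- Let g be a pseudo-metric on W compatible with (ḡ, γ, θ), and set v := id_W − (γ − θ) ∘ π (the vertical projection of the 'no-slip' connection γ − θ). Then: (i) v maps W into Vert and g(a, b) = g(v a, v b) for all a, b ∈ W, so g is determined by its restriction to Vert together with the map γ − θ; and (ii) ḡ(ū, w̄) = g(θū, θw̄) for all ū, w̄ ∈ V, so θ is an isometry from (V, ḡ) into (Vert, g restricted to Vert). -/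
/-!
Since `(γ - θ) x = θ (-x) + γ x`, compatibility gives `g ((γ - θ) x) ((γ - θ) x) = ḡ 0 0 = 0`:
the no-slip connection takes values in `g`-null vectors. By Cauchy–Schwarz for the
positive-semidefinite `g`, null vectors lie in the radical of `g`, so subtracting
`(γ - θ) (π a)` from `a` does not change `g`. Taking `w = w' = 0` in the compatibility
condition is the isometry statement.
-/

namespace LinearMap.IsPosSemidef

variable {R M : Type*} [Field R] [LinearOrder R] [IsStrictOrderedRing R]
  [AddCommGroup M] [Module R M] {B : M →ₗ[R] M →ₗ[R] R}

theorem apply_mul_apply_le (hB : B.IsPosSemidef) (x y : M) :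
    B x y * B x y ≤ B x x * B y y := by
  have hsymm : B y x = B x y := (hB.isSymm.eq x y).symm
  have hquad : ∀ t : R, 0 ≤ B x x * (t * t) + 2 * B x y * t + B y y := fun t => by
    have := hB.isNonneg.nonneg (t • x + y)
    simp only [map_add, map_smul, LinearMap.add_apply, LinearMap.smul_apply, smul_eq_mul,
      hsymm] at this
    linear_combination this
  have := discrim_le_zero hquad
  rw [discrim] at this
  linarith

theorem apply_eq_zero_of_apply_self_eq_zero (hB : B.IsPosSemidef) {x : M} (hx : B x x = 0)
    (y : M) : B x y = 0 := by
  have := hB.apply_mul_apply_le x y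
  rw [hx, zero_mul] at this
  exact mul_self_eq_zero.mp (le_antisymm this (mul_self_nonneg _))

theorem apply_sub_sub_of_apply_self_eq_zero (hB : B.IsPosSemidef) {n n' : M} (hn : B n n = 0)
    (hn' : B n' n' = 0) (a b : M) : B (a - n) (b - n') = B a b := by
  have hn_left : ∀ c, B n c = 0 := hB.apply_eq_zero_of_apply_self_eq_zero hn
  have hn'_right : ∀ c, B c n' = 0 := fun c => by
    rw [← hB.isSymm.eq n' c]
    exact hB.apply_eq_zero_of_apply_self_eq_zero hn' c
  simp only [map_sub, LinearMap.sub_apply, hn_left, hn'_right, sub_zero]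

end LinearMap.IsPosSemidef

section NoSlip

variable {V W : Type*} [AddCommGroup V] [Module ℝ V] [AddCommGroup W] [Module ℝ W]

theorem map_sub_noSlip_eq_zero {π : W →ₗ[ℝ] V} {γ θ : V →ₗ[ℝ] W} (hγ : π ∘ₗ γ = LinearMap.id)
    (hθrange : LinearMap.range θ ≤ LinearMap.ker π) (a : W) :
    π (a - (γ - θ) (π a)) = 0 := by
  have hπγ : π (γ (π a)) = π a := LinearMap.congr_fun hγ (π a)
  have hπθ : π (θ (π a)) = 0 := hθrange ⟨π a, rfl⟩
  simp only [map_sub, LinearMap.sub_apply, hπγ, hπθ, sub_zero, sub_self]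

variable {γ θ : V →ₗ[ℝ] W} {gbar : V →ₗ[ℝ] V →ₗ[ℝ] ℝ} {g : W →ₗ[ℝ] W →ₗ[ℝ] ℝ}

theorem noSlip_apply_self_eq_zero
    (hcompat : ∀ u w u' w' : V, g (θ u + γ w) (θ u' + γ w') = gbar (u + w) (u' + w'))
    (x : V) : g ((γ - θ) x) ((γ - θ) x) = 0 := by
  simpa [sub_eq_neg_add] using hcompat (-x) x (-x) x

theorem apply_solder_eq_of_compat
    (hcompat : ∀ u w u' w' : V, g (θ u + γ w) (θ u' + γ w') = gbar (u + w) (u' + w'))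
    (u u' : V) : g (θ u) (θ u') = gbar u u' := by
  simpa using hcompat u 0 u' 0

end NoSlip

theorem stmt8_general (V W : Type*)
    [AddCommGroup V] [Module ℝ V]
    [AddCommGroup W] [Module ℝ W]
    (π : W →ₗ[ℝ] V)
    (γ : V →ₗ[ℝ] W) (hγ : π ∘ₗ γ = LinearMap.id)
    (θ : V →ₗ[ℝ] W)
    (hθrange : LinearMap.range θ ≤ LinearMap.ker π)
    (gbar : V →ₗ[ℝ] V →ₗ[ℝ] ℝ)
    (g : W →ₗ[ℝ] W →ₗ[ℝ] ℝ)
    (hgsymm : ∀ u w : W, g u w = g w u)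
    (hgpos : ∀ u : W, 0 ≤ g u u)
    (hcompat : ∀ u w u' w' : V,
      g (θ u + γ w) (θ u' + γ w') = gbar (u + w) (u' + w')) :
    -- (i) the vertical projection of the no-slip connection lands in `Vert`
    (∀ a : W, π (a - (γ - θ) (π a)) = 0) ∧
    -- and `g` is determined by its restriction to `Vert` together with `γ - θ`
    (∀ a b : W, g a b = g (a - (γ - θ) (π a)) (b - (γ - θ) (π b))) ∧
    -- (ii) `θ` is an isometry from `(V, ḡ)` into `(Vert, g)`
    (∀ ub wb : V, gbar ub wb = g (θ ub) (θ wb)) := by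
  have hg : g.IsPosSemidef := ⟨⟨hgsymm⟩, ⟨hgpos⟩⟩
  refine ⟨map_sub_noSlip_eq_zero hγ hθrange, fun a b => ?_,
    fun u u' => (apply_solder_eq_of_compat hcompat u u').symm⟩
  exact (hg.apply_sub_sub_of_apply_self_eq_zero (noSlip_apply_self_eq_zero hcompat _)
    (noSlip_apply_self_eq_zero hcompat _) a b).symm

/-- (Data equivalence, pointwise form.) Let `g` be a pseudo-metric on `W`
compatible with `(ḡ, γ, θ)` and `v := id − (γ − θ) ∘ π` the vertical projection of the
no-slip connection `γ − θ`. Then (i) `v` maps `W` into `Vert = ker π` and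
`g a b = g (v a) (v b)` for all `a, b`, and (ii) `ḡ ū w̄ = g (θ ū) (θ w̄)` for all
`ū, w̄ ∈ V`, i.e. `θ` is an isometry from `(V, ḡ)` into `(Vert, g|Vert)`. -/
theorem stmt8 (V W : Type*)
    [AddCommGroup V] [Module ℝ V] [FiniteDimensional ℝ V]
    [AddCommGroup W] [Module ℝ W] [FiniteDimensional ℝ W]
    (π : W →ₗ[ℝ] V) (hπ : Function.Surjective π)
    (γ : V →ₗ[ℝ] W) (hγ : π ∘ₗ γ = LinearMap.id)
    (θ : V →ₗ[ℝ] W) (hθinj : Function.Injective θ)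
    (hθrange : LinearMap.range θ ≤ LinearMap.ker π)
    (gbar : V →ₗ[ℝ] V →ₗ[ℝ] ℝ)
    (hgbarsymm : ∀ u w : V, gbar u w = gbar w u)
    (hgbarposdef : ∀ v : V, v ≠ 0 → 0 < gbar v v)
    (g : W →ₗ[ℝ] W →ₗ[ℝ] ℝ)
    (hgsymm : ∀ u w : W, g u w = g w u)
    (hgpos : ∀ u : W, 0 ≤ g u u)
    (hcompat : ∀ u w u' w' : V,
      g (θ u + γ w) (θ u' + γ w') = gbar (u + w) (u' + w')) :
    -- (i) the vertical projection of the no-slip connection lands in `Vert`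
    (∀ a : W, π (a - (γ - θ) (π a)) = 0) ∧
    -- and `g` is determined by its restriction to `Vert` together with `γ - θ`
    (∀ a b : W, g a b = g (a - (γ - θ) (π a)) (b - (γ - θ) (π b))) ∧
    -- (ii) `θ` is an isometry from `(V, ḡ)` into `(Vert, g)`
    (∀ ub wb : V, gbar ub wb = g (θ ub) (θ wb)) :=
  stmt8_general V W π γ hγ θ hθrange gbar g hgsymm hgpos hcompat
end

section
/- Let g := ι*ḡ be the compatible pseudo-metric, g(u, w) = ḡ(ιu, ιw). For a linear map A : W → W with A(Vert) ⊆ Vert (so that there is a unique Ā : V → V with π ∘ A = Ā ∘ π, given by Ā = π ∘ A ∘ γ), the following are equivalent: (a) g(Au, Aw) = g(u, w) for all u, w ∈ W; (b) the linear map O := θ⁻¹ ∘ A ∘ θ : V → V is ḡ-orthogonal and satisfies ι ∘ A = O ∘ ι; (c) θ⁻¹ ∘ A ∘ θ is ḡ-orthogonal and θ⁻¹ ∘ A ∘ θ = Ā + θ⁻¹ ∘ (A ∘ γ − γ ∘ Ā). -/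
/-- (Characterisation of pseudo-metric-preserving maps, pointwise form.)
With `π, γ, θ` as usual (`θ` a bijective solder map onto `Vert = ker π`), `ḡ` an inner
product on `V`, `ι = π + θ⁻¹ ∘ v_γ` the interpretation projection (characterised by
`θ (ι w − π w) = w − γ (π w)`), and `g := ι*ḡ` the compatible pseudo-metric, let
`A : W → W` be linear with `A(Vert) ⊆ Vert`.  Then there is a unique shadow `Ā` with
`π ∘ A = Ā ∘ π`, namely `Ā = π ∘ A ∘ γ`, and with `O := θ⁻¹ ∘ A ∘ θ` (characterised by
`θ (O v) = A (θ v)`), the following are equivalent: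
(a) `g (A u) (A w) = g u w` for all `u, w`;
(b) `O` is `ḡ`-orthogonal and `ι ∘ A = O ∘ ι`;
(c) `O` is `ḡ`-orthogonal and `O = Ā + θ⁻¹ ∘ (A ∘ γ − γ ∘ Ā)`. -/
theorem stmt12 (V W : Type*)
    [AddCommGroup V] [Module ℝ V] [FiniteDimensional ℝ V]
    [AddCommGroup W] [Module ℝ W] [FiniteDimensional ℝ W]
    (π : W →ₗ[ℝ] V) (hπ : Function.Surjective π)
    (γ : V →ₗ[ℝ] W) (hγ : π ∘ₗ γ = LinearMap.id)
    (θ : V →ₗ[ℝ] W) (hθinj : Function.Injective θ)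
    (hθrange : LinearMap.range θ = LinearMap.ker π)
    (gbar : V →ₗ[ℝ] V →ₗ[ℝ] ℝ)
    (hgbarsymm : ∀ u w : V, gbar u w = gbar w u)
    (hgbarposdef : ∀ v : V, v ≠ 0 → 0 < gbar v v)
    (ι : W →ₗ[ℝ] V)
    (hι : ∀ w : W, θ (ι w - π w) = w - γ (π w))
    (A : W →ₗ[ℝ] W)
    (hAvert : Submodule.map A (LinearMap.ker π) ≤ LinearMap.ker π)
    (O : V →ₗ[ℝ] V)
    (hO : ∀ v : V, θ (O v) = A (θ v)) :
    -- the unique macroscopic shadow of `A` is `Ā = π ∘ A ∘ γ`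
    (π ∘ₗ A = (π ∘ₗ A ∘ₗ γ) ∘ₗ π) ∧
    (∀ B : V →ₗ[ℝ] V, π ∘ₗ A = B ∘ₗ π → B = π ∘ₗ A ∘ₗ γ) ∧
    -- (a) ↔ (b)
    ((∀ u w : W, gbar (ι (A u)) (ι (A w)) = gbar (ι u) (ι w)) ↔
      ((∀ u w : V, gbar (O u) (O w) = gbar u w) ∧
       (∀ w : W, ι (A w) = O (ι w)))) ∧
    -- (a) ↔ (c)
    ((∀ u w : W, gbar (ι (A u)) (ι (A w)) = gbar (ι u) (ι w)) ↔
      ((∀ u w : V, gbar (O u) (O w) = gbar u w) ∧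
       (∀ v : V, θ (O v - (π ∘ₗ A ∘ₗ γ) v) = A (γ v) - γ ((π ∘ₗ A ∘ₗ γ) v)))) := by
  have hπγ : ∀ v, π (γ v) = v := fun v => LinearMap.ext_iff.mp hγ v
  have hπθ : ∀ v, π (θ v) = 0 := by
    intro v
    have : θ v ∈ LinearMap.ker π := hθrange ▸ LinearMap.mem_range_self θ v
    exact this
  have hιθ : ∀ v, ι (θ v) = v := by
    intro v
    have h := hι (θ v)
    rw [hπθ v] at h
    simp only [sub_zero, map_zero] at h
    exact hθinj h
  have hιγ : ∀ v, ι (γ v) = v := by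
    intro v
    have h := hι (γ v)
    rw [hπγ v, sub_self] at h
    have h2 : ι (γ v) - v = 0 := hθinj (h.trans (map_zero θ).symm)
    exact sub_eq_zero.mp h2
  have hdec : ∀ w, A w = A (γ (π w)) + θ (O (ι w - π w)) := by
    intro w
    conv_lhs => rw [show w = γ (π w) + θ (ι w - π w) from by rw [hι w]; abel]
    rw [map_add, hO]
  have hshadow : ∀ w, π (A w) = π (A (γ (π w))) := by
    intro w
    rw [hdec w, map_add, hπθ, add_zero]
  have hkey : ∀ w, ι (A w) = ι (A (γ (π w))) + (O (ι w) - O (π w)) := by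
    intro w
    rw [hdec w, map_add, hιθ, map_sub]
  have hιAγ : ∀ v, θ (ι (A (γ v)) - π (A (γ v))) = A (γ v) - γ (π (A (γ v))) :=
    fun v => hι (A (γ v))
  -- (b)'s second condition is equivalent to the pointwise condition on γ
  have hb2_iff : (∀ w : W, ι (A w) = O (ι w)) ↔ (∀ v : V, ι (A (γ v)) = O v) := by
    constructor
    · intro h v
      have := h (γ v)
      rwa [hιγ v] at this
    · intro h w
      rw [hkey w, h (π w)]
      abel
  -- (c)'s second condition is equivalent to the same pointwise condition
  have hc2_iff : (∀ v : V, θ (O v - π (A (γ v))) = A (γ v) - γ (π (A (γ v)))) ↔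
      (∀ v : V, ι (A (γ v)) = O v) := by
    constructor
    · intro h v
      have h2 : θ (O v - π (A (γ v))) = θ (ι (A (γ v)) - π (A (γ v))) :=
        (h v).trans (hιAγ v).symm
      have h3 := hθinj h2
      exact (sub_left_inj.mp h3).symm
    · intro h v
      rw [← h v]
      exact hιAγ v
  -- nondegeneracy
  have hnondeg : ∀ d : V, (∀ z, gbar d z = 0) → d = 0 := by
    intro d hd
    by_contra h
    exact (hgbarposdef d h).ne' (hd d)
  -- orthogonality of O follows from (a)
  have horth : (∀ u w : W, gbar (ι (A u)) (ι (A w)) = gbar (ι u) (ι w)) →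
      (∀ u w : V, gbar (O u) (O w) = gbar u w) := by
    intro ha u w
    have := ha (θ u) (θ w)
    rw [← hO u, ← hO w, hιθ, hιθ, hιθ, hιθ] at this
    exact this
  -- (a) implies (b)'s second condition
  have hab2 : (∀ u w : W, gbar (ι (A u)) (ι (A w)) = gbar (ι u) (ι w)) →
      (∀ w : W, ι (A w) = O (ι w)) := by
    intro ha
    have ho := horth ha
    have hOinj : Function.Injective O := by
      rw [injective_iff_map_eq_zero]
      intro x hx
      by_contra hne
      have h1 := hgbarposdef x hne
      have h2 : gbar (O x) (O x) = gbar x x := ho x x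
      simp only [hx, map_zero, LinearMap.zero_apply] at h2
      linarith
    have hOsurj : Function.Surjective O := LinearMap.injective_iff_surjective.mp hOinj
    intro w
    have hd : ∀ z, gbar (ι (A w) - O (ι w)) z = 0 := by
      intro z
      obtain ⟨y, rfl⟩ := hOsurj z
      have h1 : gbar (ι (A w)) (O y) = gbar (ι w) y := by
        have := ha w (θ y)
        rwa [← hO y, hιθ, hιθ] at this
      have h2 : gbar (O (ι w)) (O y) = gbar (ι w) y := ho _ _
      rw [map_sub, LinearMap.sub_apply, h1, h2, sub_self]
    exact sub_eq_zero.mp (hnondeg _ hd)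
  refine ⟨?_, ?_, ?_, ?_⟩
  · ext w
    simp only [LinearMap.comp_apply]
    exact hshadow w
  · intro B hB
    ext v
    have := LinearMap.ext_iff.mp hB (γ v)
    simp only [LinearMap.comp_apply, hπγ] at this ⊢
    exact this.symm
  · constructor
    · intro ha
      exact ⟨horth ha, hab2 ha⟩
    · rintro ⟨ho, hb2⟩ u w
      rw [hb2 u, hb2 w]
      exact ho _ _
  · constructor
    · intro ha
      refine ⟨horth ha, ?_⟩
      intro v
      simp only [LinearMap.comp_apply]
      exact hc2_iff.mpr (hb2_iff.mp (hab2 ha)) v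
    · rintro ⟨ho, hc2⟩ u w
      have hb2 : ∀ w : W, ι (A w) = O (ι w) := by
        apply hb2_iff.mpr
        apply hc2_iff.mp
        intro v
        have := hc2 v
        simpa only [LinearMap.comp_apply] using this
      rw [hb2 u, hb2 w]
      exact ho _ _
end

section
/- Let ā : ℝ³ → ℝ³, M : ℝ³ → M₃(ℝ) and t : ℝ³ → ℝ³ be differentiable, and define a : E → E by a(x̄, y) = (ā(x̄), M(x̄)y + t(x̄)). Then the following are equivalent: (i) there exist R ∈ O(3) and t̄ ∈ ℝ³ such that for all (x̄, y) ∈ E and all (δx̄, δy) ∈ ℝ³ × ℝ³ one has ā(x̄) = R x̄ + t̄ and Dā(x̄)δx̄ + (DM(x̄)[δx̄])y + Dt(x̄)[δx̄] + M(x̄)δy = R(δx̄ + δy) (i.e. ι ∘ Ta = TO ∘ ι for the Galilean transformation O(x̄) = Rx̄ + t̄); (ii) there exist R ∈ O(3) and t̄, tᵛ ∈ ℝ³ such that a(x̄, y) = (R x̄ + t̄, R y + tᵛ) for all (x̄, y). -/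
/-- The ambient macroscopic Euclidean space `ℝ³` in holonomic coordinates. -/
noncomputable abbrev E3 : Type := EuclideanSpace ℝ (Fin 3)

lemma fderiv_isom_add_const (R : E3 ≃ₗᵢ[ℝ] E3) (tb x : E3) :
    fderiv ℝ (fun x : E3 => R x + tb) x = (R.toContinuousLinearEquiv : E3 →L[ℝ] E3) := by
  have h : HasFDerivAt (fun x : E3 => R x + tb)
      (R.toContinuousLinearEquiv : E3 →L[ℝ] E3) x :=
    (R.toContinuousLinearEquiv.hasFDerivAt).add_const tb
  exact h.fderiv

/-- (Form of the elements of the generalised Galilean group in holonomic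
coordinates.) Let `ā : ℝ³ → ℝ³`, `M : ℝ³ → M₃(ℝ)`, `t : ℝ³ → ℝ³` be differentiable and
`a(x̄, y) = (ā(x̄), M(x̄)y + t(x̄))`. Then: (i) there are `R ∈ O(3)`, `t̄ ∈ ℝ³` with
`ā(x̄) = Rx̄ + t̄` and `Dā(x̄)δx̄ + (DM(x̄)[δx̄])y + Dt(x̄)[δx̄] + M(x̄)δy = R(δx̄ + δy)`
for all points and tangent vectors (i.e. `ι ∘ Ta = TO ∘ ι`), if and only if (ii) there are
`R ∈ O(3)` and `t̄, tᵛ ∈ ℝ³` with `a(x̄, y) = (Rx̄ + t̄, Ry + tᵛ)` for all `(x̄, y)`. -/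
theorem stmt13 (abar : E3 → E3) (M : E3 → (E3 →L[ℝ] E3)) (t : E3 → E3)
    (habar : Differentiable ℝ abar) (hM : Differentiable ℝ M)
    (ht : Differentiable ℝ t) :
    (∃ (R : E3 ≃ₗᵢ[ℝ] E3) (tb : E3),
      (∀ x : E3, abar x = R x + tb) ∧
      (∀ x y dx dy : E3,
        fderiv ℝ abar x dx + (fderiv ℝ M x dx) y + fderiv ℝ t x dx + M x dy
          = R (dx + dy))) ↔
    (∃ (R : E3 ≃ₗᵢ[ℝ] E3) (tb tv : E3),
      (∀ x : E3, abar x = R x + tb) ∧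
      (∀ x y : E3, M x y + t x = R y + tv)) := by
  constructor
  · rintro ⟨R, tb, h1, h2⟩
    refine ⟨R, tb, t 0, h1, ?_⟩
    have habar_eq : abar = fun x => R x + tb := funext h1
    have hfd : ∀ x : E3, fderiv ℝ abar x = (R.toContinuousLinearEquiv : E3 →L[ℝ] E3) := by
      intro x; rw [habar_eq]; exact fderiv_isom_add_const R tb x
    -- M x dy = R dy
    have hMR : ∀ x dy : E3, M x dy = R dy := by
      intro x dy
      have ha := h2 x 0 0 dy
      simpa using ha
    -- fderiv t = 0
    have htd : ∀ x dx : E3, fderiv ℝ t x dx = 0 := by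
      intro x dx
      have hb := h2 x 0 dx 0
      simp only [map_zero, ContinuousLinearMap.map_zero, add_zero] at hb
      have : fderiv ℝ abar x dx = R dx := by rw [hfd]; rfl
      rw [this] at hb
      -- hb : R dx + 0 + fderiv ℝ t x dx = R dx  (after the zero simps)
      linear_combination (norm := abel_nf) hb
    have htconst : ∀ x : E3, t x = t 0 := by
      intro x
      apply is_const_of_fderiv_eq_zero ht
      intro z
      ext dx
      simp [htd z dx]
    intro x y
    rw [hMR x y, htconst x]
  · rintro ⟨R, tb, tv, h1, h2⟩
    refine ⟨R, tb, h1, ?_⟩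
    have habar_eq : abar = fun x => R x + tb := funext h1
    have htconst : ∀ x : E3, t x = tv := by
      intro x
      have := h2 x 0
      simpa using this
    have hMR : ∀ x : E3, M x = (R.toContinuousLinearEquiv : E3 →L[ℝ] E3) := by
      intro x
      apply ContinuousLinearMap.ext; intro y
      have hxy := h2 x y
      rw [htconst x] at hxy
      exact add_right_cancel hxy
    have hMconst : M = fun _ => (R.toContinuousLinearEquiv : E3 →L[ℝ] E3) := funext hMR
    have htfun : t = fun _ => tv := funext htconst
    intro x y dx dy
    rw [habar_eq, hMconst, htfun, fderiv_isom_add_const R tb x]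
    simp [map_add]
end

section
/- Let A be a first-order physically acceptable ambient transformation, i.e. A_{(x̄,y)}(δx̄, δy) = (Dā(x̄)δx̄, (P(x̄)y + Q(x̄))[δx̄] + M(x̄)δy) over the punctual map a(x̄, y) = (ā(x̄), M(x̄)y + t(x̄)), where ā : ℝ³ → ℝ³ is a C¹ diffeomorphism, M : ℝ³ → GL₃(ℝ) and t : ℝ³ → ℝ³ are C¹, P(x̄) is bilinear in (y, δx̄) and Q(x̄) is linear in δx̄. Then A satisfies all three of: (1) A preserves the ambient pseudo-metric: ⟨ι A_{(x̄,y)}(δx̄,δy), ι A_{(x̄,y)}(δx̄',δy')⟩ = ⟨δx̄ + δy, δx̄' + δy'⟩ for all points and tangent vectors; (2) A preserves the horizontal lift: P(x̄)y + Q(x̄) = 0 identically; (3) the tangent map of the punctual shadow preserves the horizontal lift: (DM(x̄)[δx̄])y + Dt(x̄)[δx̄] = 0 identically; if and only if there exist R ∈ O(3) and t̄, tᵛ ∈ ℝ³ with ā(x̄) = Rx̄ + t̄ for all x̄, M ≡ R, t ≡ tᵛ, P ≡ 0 and Q ≡ 0. -/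
open scoped RealInnerProductSpace

/-- (The generalised Galilean group as an intersection of stabilisers,
holonomic coordinates.) Let `A` be a first-order physically acceptable ambient
transformation, `A_{(x̄,y)}(δx̄, δy) = (Dā(x̄)δx̄, (P(x̄)y + Q(x̄))[δx̄] + M(x̄)δy)` over
`a(x̄,y) = (ā(x̄), M(x̄)y + t(x̄))`, with `ā` a `C¹` diffeomorphism, `M : ℝ³ → GL₃(ℝ)`
and `t` of class `C¹`.  Then `A` (1) preserves the ambient pseudo-metric, (2) preserves
the horizontal lift (`P(x̄)y + Q(x̄) = 0`), and (3) has a punctual shadow whose tangent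
preserves the horizontal lift (`(DM(x̄)[δx̄])y + Dt(x̄)[δx̄] = 0`), if and only if there
are `R ∈ O(3)` and `t̄, tᵛ ∈ ℝ³` with `ā(x̄) = Rx̄ + t̄`, `M ≡ R`, `t ≡ tᵛ`, `P ≡ 0`,
`Q ≡ 0`. -/
theorem stmt14 (abar : E3 → E3) (M : E3 → (E3 →L[ℝ] E3)) (t : E3 → E3)
    (P : E3 → (E3 →L[ℝ] E3 →L[ℝ] E3)) (Q : E3 → (E3 →L[ℝ] E3))
    (habar : ContDiff ℝ 1 abar)
    (habarbij : Function.Bijective abar)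
    (habarinv : ∃ b : E3 → E3, ContDiff ℝ 1 b ∧
      Function.LeftInverse b abar ∧ Function.RightInverse b abar)
    (hM : ContDiff ℝ 1 M) (hMinv : ∀ x : E3, Function.Bijective (M x))
    (ht : ContDiff ℝ 1 t) :
    ((∀ x y dx dy dx' dy' : E3,
        ⟪fderiv ℝ abar x dx + ((P x y) dx + Q x dx) + M x dy,
          fderiv ℝ abar x dx' + ((P x y) dx' + Q x dx') + M x dy'⟫ =
        ⟪dx + dy, dx' + dy'⟫) ∧
     (∀ x y : E3, (P x y) + Q x = 0) ∧
     (∀ x y dx : E3, (fderiv ℝ M x dx) y + fderiv ℝ t x dx = 0)) ↔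
    (∃ (R : E3 ≃ₗᵢ[ℝ] E3) (tb tv : E3),
      (∀ x : E3, abar x = R x + tb) ∧
      (∀ x y : E3, M x y = R y) ∧
      (∀ x : E3, t x = tv) ∧
      (∀ x : E3, P x = 0) ∧
      (∀ x : E3, Q x = 0)) := by
  constructor
  · rintro ⟨h1, h2, h3⟩
    -- From (2): Q = 0 and P = 0.
    have hQ : ∀ x : E3, Q x = 0 := by
      intro x
      have h := h2 x 0
      simpa using h
    have hP : ∀ x : E3, P x = 0 := by
      intro x
      refine ContinuousLinearMap.ext fun y => ?_
      have h := h2 x y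
      rw [hQ x] at h
      simpa using h
    -- Simplified metric condition
    have h1' : ∀ x dx dy dx' dy' : E3,
        ⟪fderiv ℝ abar x dx + M x dy, fderiv ℝ abar x dx' + M x dy'⟫ =
          ⟪dx + dy, dx' + dy'⟫ := by
      intro x dx dy dx' dy'
      have h := h1 x 0 dx dy dx' dy'
      simpa [hP, hQ] using h
    have hMiso : ∀ x dy dy' : E3, ⟪M x dy, M x dy'⟫ = ⟪dy, dy'⟫ := by
      intro x dy dy'
      have h := h1' x 0 dy 0 dy'
      simpa using h
    have hcross : ∀ x dx dy' : E3, ⟪fderiv ℝ abar x dx, M x dy'⟫ = ⟪dx, dy'⟫ := by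
      intro x dx dy'
      have h := h1' x dx 0 0 dy'
      simpa using h
    -- fderiv abar x = M x
    have hDM : ∀ x : E3, fderiv ℝ abar x = M x := by
      intro x
      refine ContinuousLinearMap.ext fun dx => ?_
      have hz : ∀ z : E3, ⟪fderiv ℝ abar x dx - M x dx, z⟫ = 0 := by
        intro z
        obtain ⟨dy', rfl⟩ := (hMinv x).2 z
        rw [inner_sub_left, hcross, hMiso, sub_self]
      have := hz (fderiv ℝ abar x dx - M x dx)
      rw [inner_self_eq_zero] at this
      exact sub_eq_zero.mp this
    -- From (3): fderiv t = 0 and fderiv M = 0.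
    have hdt : ∀ x : E3, fderiv ℝ t x = 0 := by
      intro x
      refine ContinuousLinearMap.ext fun dx => ?_
      have h := h3 x 0 dx
      simpa using h
    have hdM : ∀ x : E3, fderiv ℝ M x = 0 := by
      intro x
      refine ContinuousLinearMap.ext fun dx => ContinuousLinearMap.ext fun y => ?_
      have h := h3 x y dx
      rw [hdt x] at h
      simpa using h
    -- M and t are constant
    have hMconst : ∀ x : E3, M x = M 0 :=
      fun x => is_const_of_fderiv_eq_zero (hM.differentiable one_ne_zero) hdM x 0
    have htconst : ∀ x : E3, t x = t 0 :=
      fun x => is_const_of_fderiv_eq_zero (ht.differentiable one_ne_zero) hdt x 0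
    -- Build the isometry
    let Rli : E3 →ₗᵢ[ℝ] E3 :=
      (M 0 : E3 →ₗ[ℝ] E3).isometryOfInner (fun u v => hMiso 0 u v)
    have hRmem : Function.Surjective Rli := (hMinv 0).2
    let R : E3 ≃ₗᵢ[ℝ] E3 := LinearIsometryEquiv.ofSurjective Rli hRmem
    have hR : ∀ y : E3, R y = M 0 y := fun y => rfl
    -- abar x = R x + abar 0
    have habarform : ∀ x : E3, abar x = R x + abar 0 := by
      have hg : ∀ x : E3, fderiv ℝ (fun x => abar x - M 0 x) x = 0 := by
        intro x
        rw [fderiv_fun_sub ((habar.differentiable one_ne_zero) x)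
          (M 0).differentiableAt, (M 0).fderiv, hDM, hMconst, sub_self]
      have hgd : Differentiable ℝ (fun x : E3 => abar x - M 0 x) :=
        (habar.differentiable one_ne_zero).sub (M 0).differentiable
      have hconst : ∀ x : E3, abar x - M 0 x = abar 0 - M 0 0 :=
        fun x => is_const_of_fderiv_eq_zero hgd hg x 0
      intro x
      have h := hconst x
      rw [map_zero, sub_zero] at h
      rw [hR]
      linear_combination (norm := module) h
    exact ⟨R, abar 0, t 0, habarform,
      fun x y => by rw [hMconst x, hR], htconst, hP, hQ⟩
  · rintro ⟨R, tb, tv, habarform, hMR, htc, hP, hQ⟩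
    have hRclm : ∀ y : E3, (R.toLinearIsometry.toContinuousLinearMap) y = R y :=
      fun y => rfl
    have hMc : ∀ x : E3, M x = R.toLinearIsometry.toContinuousLinearMap := by
      intro x; ext y; rw [hMR]; rfl
    have hDabar : ∀ x : E3, fderiv ℝ abar x = R.toLinearIsometry.toContinuousLinearMap := by
      intro x
      have : abar = fun x => R.toLinearIsometry.toContinuousLinearMap x + tb := by
        funext z; rw [habarform]; rfl
      rw [this, fderiv_add_const, ContinuousLinearMap.fderiv]
    have hdM : ∀ x : E3, fderiv ℝ M x = 0 := by
      intro x
      have : M = fun _ : E3 => R.toLinearIsometry.toContinuousLinearMap := funext hMc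
      rw [this, fderiv_fun_const]; rfl
    have hdt : ∀ x : E3, fderiv ℝ t x = 0 := by
      intro x
      have : t = fun _ : E3 => tv := funext htc
      rw [this, fderiv_fun_const]; rfl
    refine ⟨?_, ?_, ?_⟩
    · intro x y dx dy dx' dy'
      rw [hP, hQ, hDabar]
      simp only [ContinuousLinearMap.zero_apply, add_zero,
        ContinuousLinearMap.coe_zero, Pi.zero_apply]
      rw [hRclm, hRclm, hMR, hMR, ← map_add R, ← map_add R]
      exact R.inner_map_map _ _
    · intro x y
      rw [hP, hQ]; simp
    · intro x y dx
      rw [hdM, hdt]; simp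
end

section
/- Let ā : ℝ³ → ℝ³ be C¹, M : ℝ³ → M₃(ℝ) a map, and P : ℝ³ → Bil(ℝ³ × ℝ³, ℝ³) a map, and consider the micro-linear first-order transformation A_{(x̄,y)}(δx̄, δy) = (Dā(x̄)δx̄, P(x̄)(y, δx̄) + M(x̄)δy). If A preserves the ambient pseudo-metric, i.e. ⟨Dā(x̄)δx̄ + P(x̄)(y, δx̄) + M(x̄)δy, Dā(x̄)δx̄' + P(x̄)(y, δx̄') + M(x̄)δy'⟩ = ⟨δx̄ + δy, δx̄' + δy'⟩ for all x̄, y ∈ ℝ³ and all (δx̄, δy), (δx̄', δy'), then there exist R ∈ O(3) and t̄ ∈ ℝ³ such that ā(x̄) = Rx̄ + t̄ for all x̄, M ≡ R and P ≡ 0. In particular, for micro-linear transformations, preservation of the pseudo-metric alone forces the transformation to be a generalised Galilean transformation. -/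
open scoped RealInnerProductSpace

/-- A continuous linear map preserving the inner product, upgraded to a linear
isometry equivalence (possible since `E3` is finite dimensional). -/
noncomputable def innerIsoEquiv (T : E3 →L[ℝ] E3)
    (h : ∀ v w : E3, ⟪T v, T w⟫ = ⟪v, w⟫) : E3 ≃ₗᵢ[ℝ] E3 :=
  ((T : E3 →ₗ[ℝ] E3).isometryOfInner h).toLinearIsometryEquiv rfl

@[simp] lemma innerIsoEquiv_apply (T : E3 →L[ℝ] E3)
    (h : ∀ v w : E3, ⟪T v, T w⟫ = ⟪v, w⟫) (v : E3) :
    innerIsoEquiv T h v = T v := rfl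

lemma norm_symm_le_one (E : E3 ≃ₗᵢ[ℝ] E3) :
    ‖(E.toContinuousLinearEquiv.symm : E3 →L[ℝ] E3)‖ ≤ 1 := by
  apply ContinuousLinearMap.opNorm_le_bound _ zero_le_one
  intro w
  have h2 : E.toContinuousLinearEquiv (E.toContinuousLinearEquiv.symm w) = w :=
    E.toContinuousLinearEquiv.apply_symm_apply w
  have h3 : E (E.toContinuousLinearEquiv.symm w) = w := h2
  calc ‖(E.toContinuousLinearEquiv.symm : E3 →L[ℝ] E3) w‖
      = ‖E ((E.toContinuousLinearEquiv.symm : E3 →L[ℝ] E3) w)‖ := (E.norm_map _).symm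
    _ = ‖w‖ := by rw [show E ((E.toContinuousLinearEquiv.symm : E3 →L[ℝ] E3) w) = w from h3]
    _ ≤ 1 * ‖w‖ := by rw [one_mul]

/-- Rigidity: a `C¹` self-map of `ℝ³` whose derivative preserves the inner product
everywhere has constant derivative and is affine. -/
lemma rigidity (f : E3 → E3) (hf : ContDiff ℝ 1 f)
    (hiso : ∀ x v w : E3, ⟪fderiv ℝ f x v, fderiv ℝ f x w⟫ = ⟪v, w⟫) :
    (∀ x : E3, fderiv ℝ f x = fderiv ℝ f 0) ∧
    (∀ x : E3, f x = fderiv ℝ f 0 x + f 0) := by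
  have hdiff : Differentiable ℝ f := hf.differentiable one_ne_zero
  have hcont : Continuous (fderiv ℝ f) := hf.continuous_fderiv one_ne_zero
  have hnorm : ∀ x v : E3, ‖fderiv ℝ f x v‖ = ‖v‖ := fun x v =>
    (innerIsoEquiv (fderiv ℝ f x) (hiso x)).norm_map v
  have hop : ∀ x : E3, ‖fderiv ℝ f x‖ ≤ 1 := fun x =>
    ContinuousLinearMap.opNorm_le_bound _ zero_le_one (fun v => by rw [hnorm, one_mul])
  have hlip : ∀ b c : E3, ‖f b - f c‖ ≤ ‖b - c‖ := by
    intro b c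
    have := convex_univ.norm_image_sub_le_of_norm_fderiv_le
      (f := f) (C := 1) (fun x _ => hdiff x) (fun x _ => hop x)
      (Set.mem_univ c) (Set.mem_univ b)
    simpa using this
  -- Step B : local isometry property around each point
  have hlociso : ∀ a : E3, ∃ r > 0, ∀ b ∈ Metric.ball a r, ‖f b - f a‖ = ‖b - a‖ := by
    intro a
    have hcoe : ((innerIsoEquiv (fderiv ℝ f a) (hiso a)).toContinuousLinearEquiv
        : E3 →L[ℝ] E3) = fderiv ℝ f a := by ext v; rfl
    have hst : HasStrictFDerivAt f (fderiv ℝ f a) a := hf.hasStrictFDerivAt one_ne_zero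
    rw [← hcoe] at hst
    set Φ := hst.toOpenPartialHomeomorph f with hΦ
    have hΦcoe : ⇑Φ = f := hst.toOpenPartialHomeomorph_coe
    have haso : a ∈ Φ.source := hst.mem_toOpenPartialHomeomorph_source
    have hfat : f a ∈ Φ.target := hst.image_mem_toOpenPartialHomeomorph_target
    have hsymm : ∀ y ∈ Φ.target, HasFDerivAt Φ.symm
        (((innerIsoEquiv (fderiv ℝ f (Φ.symm y))
          (hiso (Φ.symm y))).toContinuousLinearEquiv.symm : E3 →L[ℝ] E3)) y := by
      intro y hy
      apply Φ.hasFDerivAt_symm hy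
      have hd : HasFDerivAt f (fderiv ℝ f (Φ.symm y)) (Φ.symm y) := (hdiff _).hasFDerivAt
      have hc : ((innerIsoEquiv (fderiv ℝ f (Φ.symm y))
          (hiso (Φ.symm y))).toContinuousLinearEquiv : E3 →L[ℝ] E3)
          = fderiv ℝ f (Φ.symm y) := by ext v; rfl
      rw [hΦcoe, hc]
      exact hd
    obtain ⟨ρ, hρ, hball⟩ := Metric.isOpen_iff.mp Φ.open_target (f a) hfat
    have hglip : ∀ u v : E3, u ∈ Metric.ball (f a) ρ → v ∈ Metric.ball (f a) ρ →
        ‖Φ.symm u - Φ.symm v‖ ≤ ‖u - v‖ := by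
      intro u v hu hv
      have := (convex_ball (f a) ρ).norm_image_sub_le_of_norm_hasFDerivWithin_le
        (f := ⇑Φ.symm) (C := 1)
        (f' := fun y => ((innerIsoEquiv (fderiv ℝ f (Φ.symm y))
          (hiso (Φ.symm y))).toContinuousLinearEquiv.symm : E3 →L[ℝ] E3))
        (fun y hy => (hsymm y (hball hy)).hasFDerivWithinAt)
        (fun y _ => norm_symm_le_one _) hv hu
      simpa using this
    obtain ⟨r₁, hr₁, hsrc⟩ := Metric.isOpen_iff.mp Φ.open_source a haso
    obtain ⟨r₂, hr₂, hr₂'⟩ := Metric.continuousAt_iff.mp hdiff.continuous.continuousAt ρ hρ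
    refine ⟨min r₁ r₂, lt_min hr₁ hr₂, ?_⟩
    intro b hb
    have hbd : dist b a < min r₁ r₂ := Metric.mem_ball.mp hb
    have hbs : b ∈ Φ.source := hsrc (Metric.mem_ball.mpr (lt_of_lt_of_le hbd (min_le_left _ _)))
    have hfb : f b ∈ Metric.ball (f a) ρ :=
      Metric.mem_ball.mpr (hr₂' (lt_of_lt_of_le hbd (min_le_right _ _)))
    have hfa : f a ∈ Metric.ball (f a) ρ := Metric.mem_ball_self hρ
    have hleft : ∀ c ∈ Φ.source, Φ.symm (f c) = c := by
      intro c hc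
      have := Φ.left_inv hc
      rwa [hΦcoe] at this
    have hge : ‖b - a‖ ≤ ‖f b - f a‖ := by
      calc ‖b - a‖ = ‖Φ.symm (f b) - Φ.symm (f a)‖ := by rw [hleft b hbs, hleft a haso]
        _ ≤ ‖f b - f a‖ := hglip _ _ hfb hfa
    exact le_antisymm (hlip b a) hge
  -- Step C : local affinity
  have hstepC : ∀ a : E3, ∃ r > 0, ∀ b ∈ Metric.ball a r,
      f b = f a + fderiv ℝ f a (b - a) := by
    intro a
    obtain ⟨r, hr, hiso'⟩ := hlociso a
    refine ⟨r, hr, ?_⟩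
    intro b hb
    set v : E3 := b - a with hv
    set m : E3 := f b - f a with hm
    have hmv : ‖m‖ = ‖v‖ := hiso' b hb
    by_cases hm0 : m = 0
    · have hv0 : v = 0 := norm_eq_zero.mp (by rw [← hmv, hm0, norm_zero])
      have hba : b = a := sub_eq_zero.mp hv0
      rw [hba, hv0]
      simp
    · have hDa : ∀ t : ℝ, HasDerivAt (fun s : ℝ => f (a + s • v))
          (fderiv ℝ f (a + t • v) v) t := by
        intro t
        have hcurve : HasDerivAt (fun s : ℝ => a + s • v) v t := by
          simpa using ((hasDerivAt_id t).smul_const v).const_add a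
        have := (hdiff (a + t • v)).hasFDerivAt.comp_hasDerivAt t hcurve
        exact this
      set ψ : ℝ → ℝ := fun t => ⟪f (a + t • v), m⟫ - t * ‖m‖ ^ 2 with hψdef
      have hψd : ∀ t : ℝ, HasDerivAt ψ (⟪fderiv ℝ f (a + t • v) v, m⟫ - ‖m‖ ^ 2) t := by
        intro t
        have h1 := HasDerivAt.inner ℝ (hDa t) (hasDerivAt_const t m)
        have h2 : HasDerivAt (fun s : ℝ => s * ‖m‖ ^ 2) (‖m‖ ^ 2) t :=
          hasDerivAt_mul_const _
        have h3 := h1.sub h2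
        simp at h3
        exact h3
      have hψ'le : ∀ t : ℝ, ⟪fderiv ℝ f (a + t • v) v, m⟫ - ‖m‖ ^ 2 ≤ 0 := by
        intro t
        have h1 := real_inner_le_norm (fderiv ℝ f (a + t • v) v) m
        rw [hnorm, ← hmv] at h1
        nlinarith [h1]
      have hanti : Antitone ψ := by
        apply antitone_of_deriv_nonpos
        · exact fun t => (hψd t).differentiableAt
        · intro t; rw [(hψd t).deriv]; exact hψ'le t
      have hab : a + v = b := by rw [hv]; abel
      have hψ1 : ψ 1 = ψ 0 := by
        have hinner : ⟪f b, m⟫ - ⟪f a, m⟫ = ‖m‖ ^ 2 := by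
          rw [← inner_sub_left, ← hm, real_inner_self_eq_norm_sq]
        simp only [hψdef, one_smul, zero_smul, add_zero, hab, one_mul, zero_mul]
        linarith
      have hconstψ : ∀ t ∈ Set.Icc (0 : ℝ) 1, ψ t = ψ 0 := by
        intro t ht
        have h1 : ψ t ≤ ψ 0 := hanti ht.1
        have h2 : ψ 1 ≤ ψ t := hanti ht.2
        linarith
      have hG : ∀ t ∈ Set.Ioo (0 : ℝ) 1, ⟪fderiv ℝ f (a + t • v) v, m⟫ = ‖m‖ ^ 2 := by
        intro t ht
        have hev : ψ =ᶠ[nhds t] fun _ => ψ 0 := by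
          filter_upwards [Ioo_mem_nhds ht.1 ht.2] with s hsmem
          exact hconstψ s (Set.Ioo_subset_Icc_self hsmem)
        have hz : deriv ψ t = 0 := by rw [hev.deriv_eq]; exact deriv_const t _
        have := (hψd t).deriv
        rw [hz] at this
        linarith
      have hGcont : Continuous fun t : ℝ => ⟪fderiv ℝ f (a + t • v) v, m⟫ := by
        have h1 : Continuous fun t : ℝ => fderiv ℝ f (a + t • v) :=
          hcont.comp (continuous_const.add (continuous_id.smul continuous_const))
        exact Continuous.inner (h1.clm_apply continuous_const) continuous_const
      have h0 : ⟪fderiv ℝ f a v, m⟫ = ‖m‖ ^ 2 := by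
        have hEq : Set.EqOn (fun t : ℝ => ⟪fderiv ℝ f (a + t • v) v, m⟫)
            (fun _ => ‖m‖ ^ 2) (Set.Ioo 0 1) := fun t ht => hG t ht
        have hcl := hEq.closure hGcont continuous_const
        have h01 : (0 : ℝ) ∈ closure (Set.Ioo (0 : ℝ) 1) := by
          rw [closure_Ioo (zero_ne_one)]
          exact ⟨le_refl 0, zero_le_one⟩
        have := hcl h01
        simpa using this
      have hnv : ‖fderiv ℝ f a v‖ = ‖m‖ := by rw [hnorm, hmv]
      have heq : ⟪fderiv ℝ f a v, m⟫ = ‖fderiv ℝ f a v‖ * ‖m‖ := by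
        rw [hnv, ← pow_two]; exact h0
      have hsmul := inner_eq_norm_mul_iff_real.mp heq
      rw [hnv] at hsmul
      have hmne : ‖m‖ ≠ 0 := fun h => hm0 (norm_eq_zero.mp h)
      have hfin : fderiv ℝ f a v = m := smul_right_injective E3 hmne hsmul
      rw [hfin, hm]
      abel
  -- Step D : the derivative is constant
  have hloc : ∀ a : E3, ∃ r > 0, ∀ b ∈ Metric.ball a r, fderiv ℝ f b = fderiv ℝ f a := by
    intro a
    obtain ⟨r, hr, haff⟩ := hstepC a
    refine ⟨r, hr, fun b hb => ?_⟩
    have hev : f =ᶠ[nhds b] fun z => (f a - fderiv ℝ f a a) + fderiv ℝ f a z := by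
      filter_upwards [Metric.isOpen_ball.mem_nhds hb] with z hz
      rw [haff z hz, map_sub]
      abel
    rw [hev.fderiv_eq, fderiv_const_add, (fderiv ℝ f a).fderiv]
  have hconstD : ∀ x : E3, fderiv ℝ f x = fderiv ℝ f 0 := by
    set S : Set E3 := {x : E3 | fderiv ℝ f x = fderiv ℝ f 0} with hSdef
    have hopen : IsOpen S := by
      rw [Metric.isOpen_iff]
      intro x hx
      obtain ⟨r, hr, h⟩ := hloc x
      exact ⟨r, hr, fun b hb => (h b hb).trans hx⟩
    have hclosed : IsClosed S := by
      rw [← isOpen_compl_iff, Metric.isOpen_iff]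
      intro x hx
      obtain ⟨r, hr, h⟩ := hloc x
      exact ⟨r, hr, fun b hb hbS => hx ((h b hb).symm.trans hbS)⟩
    have huniv : S = Set.univ := IsClopen.eq_univ ⟨hclosed, hopen⟩ ⟨0, rfl⟩
    intro x
    have hx : x ∈ S := huniv ▸ Set.mem_univ x
    exact hx
  refine ⟨hconstD, ?_⟩
  intro x
  set L : E3 →L[ℝ] E3 := fderiv ℝ f 0 with hL
  have hgd : Differentiable ℝ fun z : E3 => f z - L z :=
    fun y => (hdiff y).sub L.differentiableAt
  have hg : ∀ y : E3, fderiv ℝ (fun z : E3 => f z - L z) y = 0 := by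
    intro y
    rw [fderiv_fun_sub (hdiff y) L.differentiableAt, L.fderiv, hconstD y, sub_self]
  have hcst := is_const_of_fderiv_eq_zero hgd hg x 0
  have hsub : f x - L x = f 0 := by
    rw [hcst]
    simp
  have := sub_eq_iff_eq_add.mp hsub
  rw [this]
  abel

/-- (Micro-linear generalised Galilean group as the stabiliser of the
pseudo-metric alone, holonomic coordinates.) Let `ā : ℝ³ → ℝ³` be `C¹`,
`M : ℝ³ → M₃(ℝ)` and `P : ℝ³ → Bil(ℝ³ × ℝ³, ℝ³)`, and consider the micro-linear
first-order transformation `A_{(x̄,y)}(δx̄, δy) = (Dā(x̄)δx̄, P(x̄)(y, δx̄) + M(x̄)δy)`.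
If `A` preserves the ambient pseudo-metric, then there exist `R ∈ O(3)` and `t̄ ∈ ℝ³`
with `ā(x̄) = Rx̄ + t̄`, `M ≡ R` and `P ≡ 0`. -/
theorem stmt15 (abar : E3 → E3) (M : E3 → (E3 →L[ℝ] E3))
    (P : E3 → (E3 →L[ℝ] E3 →L[ℝ] E3))
    (habar : ContDiff ℝ 1 abar)
    (hpres : ∀ x y dx dy dx' dy' : E3,
      ⟪fderiv ℝ abar x dx + (P x y) dx + M x dy,
        fderiv ℝ abar x dx' + (P x y) dx' + M x dy'⟫ =
      ⟪dx + dy, dx' + dy'⟫) :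
    ∃ (R : E3 ≃ₗᵢ[ℝ] E3) (tb : E3),
      (∀ x : E3, abar x = R x + tb) ∧
      (∀ x y : E3, M x y = R y) ∧
      (∀ x : E3, P x = 0) := by
  -- M preserves the inner product
  have hMiso : ∀ x v w : E3, ⟪M x v, M x w⟫ = ⟪v, w⟫ := by
    intro x v w
    have := hpres x 0 0 v 0 w
    simpa using this
  -- the coupling relation
  have hDPM : ∀ x y dx : E3, fderiv ℝ abar x dx + P x y dx = M x dx := by
    intro x y dx
    have hkey : ∀ dy' : E3,
        ⟪(fderiv ℝ abar x dx + P x y dx) - M x dx, M x dy'⟫ = 0 := by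
      intro dy'
      have h1 := hpres x y dx 0 0 dy'
      simp only [map_zero, add_zero, zero_add] at h1
      rw [inner_sub_left, h1, hMiso x dx dy', sub_self]
    set w : E3 := (fderiv ℝ abar x dx + P x y dx) - M x dx with hw
    have happ : M x ((innerIsoEquiv (M x) (hMiso x)).symm w) = w :=
      (innerIsoEquiv (M x) (hMiso x)).apply_symm_apply w
    have h2 := hkey ((innerIsoEquiv (M x) (hMiso x)).symm w)
    rw [happ] at h2
    have hw0 : w = 0 := inner_self_eq_zero.mp h2
    have := sub_eq_zero.mp hw0
    exact this
  -- the punctual derivative is M x, and P vanishes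
  have hDeq : ∀ x dx : E3, fderiv ℝ abar x dx = M x dx := by
    intro x dx
    have h0 := hDPM x 0 dx
    have hP0 : (P x) 0 = 0 := map_zero (P x)
    rw [hP0] at h0
    simpa using h0
  have hPzero : ∀ x : E3, P x = 0 := by
    intro x
    ext y dx
    have h1 := hDPM x y dx
    rw [hDeq x dx] at h1
    have h2 := add_eq_left.mp h1
    rw [h2]
    rfl
  -- derivative preserves the inner product
  have hiso0 : ∀ x v w : E3, ⟪fderiv ℝ abar x v, fderiv ℝ abar x w⟫ = ⟪v, w⟫ := by
    intro x v w
    rw [hDeq x v, hDeq x w]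
    exact hMiso x v w
  obtain ⟨hDconst, haff⟩ := rigidity abar habar hiso0
  refine ⟨innerIsoEquiv (fderiv ℝ abar 0) (hiso0 0), abar 0, ?_, ?_, hPzero⟩
  · intro x
    exact haff x
  · intro x y
    show M x y = fderiv ℝ abar 0 y
    rw [← hDeq x y, hDconst x]
end

section
/- Let n ≥ 1 and let f : ℝⁿ → ℝⁿ be a C¹ map whose derivative at every point is a linear isometry, i.e. ‖Df(x)·v‖ = ‖v‖ for every x ∈ ℝⁿ and every v ∈ ℝⁿ (Euclidean norm). Then f is an affine isometry: there exist a linear isometry R of ℝⁿ and c ∈ ℝⁿ such that f(x) = R x + c for all x. -/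
open Metric Filter Set
open scoped Topology RealInnerProductSpace

theorem rigidity_aux {E : Type*} [NormedAddCommGroup E] [InnerProductSpace ℝ E]
    [FiniteDimensional ℝ E] {f : E → E} (hf : ContDiff ℝ 1 f)
    (hiso : ∀ x v, ‖fderiv ℝ f x v‖ = ‖v‖) (x : E) :
    f x = fderiv ℝ f 0 x + f 0 := by
  have hdiff : Differentiable ℝ f := hf.differentiable one_ne_zero
  -- derivative at each point upgraded to a continuous linear equiv
  have hEq : ∀ x : E, ∃ e : E ≃L[ℝ] E, (e : E →L[ℝ] E) = fderiv ℝ f x := by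
    intro x
    exact ⟨((⟨(fderiv ℝ f x : E →ₗ[ℝ] E), hiso x⟩ : E →ₗᵢ[ℝ] E).toLinearIsometryEquiv
        rfl).toContinuousLinearEquiv, by ext v; rfl⟩
  choose eqv heqv using hEq
  have heqv_apply : ∀ x v, eqv x v = fderiv ℝ f x v := by
    intro x v
    have := heqv x
    calc eqv x v = ((eqv x : E →L[ℝ] E)) v := rfl
      _ = fderiv ℝ f x v := by rw [this]
  have hsymm_norm : ∀ x w, ‖(eqv x).symm w‖ = ‖w‖ := by
    intro x w
    have h1 : ‖fderiv ℝ f x ((eqv x).symm w)‖ = ‖(eqv x).symm w‖ := hiso x _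
    rw [← heqv_apply, (eqv x).apply_symm_apply] at h1
    exact h1.symm
  have hstrict : ∀ x : E, HasStrictFDerivAt f ((eqv x : E →L[ℝ] E)) x := by
    intro x
    rw [heqv x]
    exact hf.contDiffAt.hasStrictFDerivAt one_ne_zero
  have hlip : LipschitzWith 1 f := by
    apply lipschitzWith_of_nnnorm_fderiv_le hdiff
    intro x
    have h1 : ‖fderiv ℝ f x‖ ≤ 1 :=
      (fderiv ℝ f x).opNorm_le_bound zero_le_one fun v => by rw [hiso]; simp
    exact_mod_cast h1
  -- local distance preservation
  have key : ∀ x₀ : E, ∃ δ > 0, ∀ y ∈ ball x₀ δ, ∀ z ∈ ball x₀ δ,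
      ‖f y - f z‖ = ‖y - z‖ := by
    intro x₀
    set ph := (hstrict x₀).toOpenPartialHomeomorph f with hph
    have hsrc : x₀ ∈ ph.source := (hstrict x₀).mem_toOpenPartialHomeomorph_source
    have hcoe : (ph : E → E) = f := (hstrict x₀).toOpenPartialHomeomorph_coe
    have htgt : f x₀ ∈ ph.target := (hstrict x₀).image_mem_toOpenPartialHomeomorph_target
    have hg : ∀ y ∈ ph.target, HasFDerivAt ph.symm
        (((eqv (ph.symm y)).symm : E →L[ℝ] E)) y := by
      intro y hy
      have h1 : ContinuousAt ph.symm y := ph.continuousAt_symm hy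
      have h2 : HasFDerivAt f ((eqv (ph.symm y) : E →L[ℝ] E)) (ph.symm y) := by
        rw [heqv]; exact (hdiff _).hasFDerivAt
      have h3 : ∀ᶠ z in 𝓝 y, f (ph.symm z) = z := by
        filter_upwards [ph.eventually_right_inverse hy] with z hz
        rw [← hcoe]; exact hz
      exact h2.of_local_left_inverse h1 h3
    obtain ⟨ε, hε, hball⟩ := Metric.isOpen_iff.mp ph.open_target (f x₀) htgt
    have hsymml : ∀ u ∈ ball (f x₀) ε, ∀ w ∈ ball (f x₀) ε,
        ‖ph.symm u - ph.symm w‖ ≤ ‖u - w‖ := by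
      intro u hu w hw
      have hb : ∀ y ∈ ball (f x₀) ε,
          ‖(((eqv (ph.symm y)).symm : E →L[ℝ] E))‖ ≤ 1 := by
        intro y _
        exact ContinuousLinearMap.opNorm_le_bound _ zero_le_one fun v => by
          rw [ContinuousLinearEquiv.coe_coe, hsymm_norm]; simp
      have hderiv : ∀ y ∈ ball (f x₀) ε, HasFDerivWithinAt ph.symm
          (((eqv (ph.symm y)).symm : E →L[ℝ] E)) (ball (f x₀) ε) y :=
        fun y hy => (hg y (hball hy)).hasFDerivWithinAt
      have := Convex.norm_image_sub_le_of_norm_hasFDerivWithin_le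
        hderiv hb (convex_ball (f x₀) ε) hw hu
      simpa using this
    have hob : IsOpen (ball (f x₀) ε) := isOpen_ball
    have hopen : IsOpen (ph.source ∩ f ⁻¹' ball (f x₀) ε) :=
      ph.open_source.inter (hob.preimage hf.continuous)
    obtain ⟨δ, hδ, hδsub⟩ := Metric.isOpen_iff.mp hopen x₀
      ⟨hsrc, mem_ball_self hε⟩
    refine ⟨δ, hδ, fun y hy z hz => ?_⟩
    obtain ⟨hy1, hy2⟩ := hδsub hy
    obtain ⟨hz1, hz2⟩ := hδsub hz
    have h1 : ‖f y - f z‖ ≤ ‖y - z‖ := by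
      have := hlip.dist_le_mul y z
      simpa [dist_eq_norm] using this
    have h2 : ‖y - z‖ ≤ ‖f y - f z‖ := by
      have e1 : ph.symm (f y) = y := by rw [← hcoe]; exact ph.left_inv hy1
      have e2 : ph.symm (f z) = z := by rw [← hcoe]; exact ph.left_inv hz1
      have := hsymml (f y) hy2 (f z) hz2
      rwa [e1, e2] at this
    linarith
  -- local affineness
  have laff : ∀ x₀ : E, ∃ δ > 0, ∀ y ∈ ball x₀ δ,
      f y = f x₀ + fderiv ℝ f x₀ (y - x₀) := by
    intro x₀
    obtain ⟨δ, hδ, hpres⟩ := key x₀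
    refine ⟨δ, hδ, fun y hy => ?_⟩
    set v := y - x₀ with hv
    set a := f y - f x₀ with ha
    have hx₀ : x₀ ∈ ball x₀ δ := mem_ball_self hδ
    have hvδ : ‖v‖ < δ := by
      rw [hv, ← dist_eq_norm]; exact hy
    have hmem : ∀ t ∈ Ioc (0:ℝ) 1, x₀ + t • v ∈ ball x₀ δ := by
      intro t ht
      rw [mem_ball, dist_eq_norm]
      have e : x₀ + t • v - x₀ = t • v := by abel
      rw [e, norm_smul, Real.norm_eq_abs, abs_of_pos ht.1]
      calc t * ‖v‖ ≤ 1 * ‖v‖ := by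
            apply mul_le_mul_of_nonneg_right ht.2 (norm_nonneg _)
        _ < δ := by simpa using hvδ
    have hyv : y = x₀ + v := by rw [hv]; abel
    have hinner : ∀ t ∈ Ioc (0:ℝ) 1,
        ⟪a, f (x₀ + t • v) - f x₀⟫ = t * ‖v‖ ^ 2 := by
      intro t ht
      have n1 : ‖a‖ = ‖v‖ := by rw [ha, hv, hpres y hy x₀ hx₀]
      have n2 : ‖f (x₀ + t • v) - f x₀‖ = t * ‖v‖ := by
        rw [hpres _ (hmem t ht) x₀ hx₀]
        have e : x₀ + t • v - x₀ = t • v := by abel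
        rw [e, norm_smul, Real.norm_eq_abs, abs_of_pos ht.1]
      have n3 : ‖a - (f (x₀ + t • v) - f x₀)‖ = (1 - t) * ‖v‖ := by
        have e0 : a - (f (x₀ + t • v) - f x₀) = f y - f (x₀ + t • v) := by
          rw [ha]; abel
        rw [e0, hpres y hy _ (hmem t ht)]
        have e1 : y - (x₀ + t • v) = (1 - t) • v := by
          rw [hyv, sub_smul, one_smul]; abel
        rw [e1, norm_smul, Real.norm_eq_abs,
          abs_of_nonneg (by linarith [ht.2] : (0:ℝ) ≤ 1 - t)]
      rw [real_inner_eq_norm_mul_self_add_norm_mul_self_sub_norm_sub_mul_self_div_two,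
        n1, n2, n3]
      ring
    have hder : HasDerivAt (fun t : ℝ => f (x₀ + t • v)) (fderiv ℝ f x₀ v) 0 := by
      have h1 : HasDerivAt (fun t : ℝ => x₀ + t • v) v 0 := by
        simpa using ((hasDerivAt_id (0:ℝ)).smul_const v).const_add x₀
      have h2 : HasFDerivAt f (fderiv ℝ f x₀) (x₀ + (0:ℝ) • v) := by
        simpa using (hdiff x₀).hasFDerivAt
      exact h2.comp_hasDerivAt 0 h1
    have hslope : Tendsto (fun t : ℝ => ⟪a, t⁻¹ • (f (x₀ + t • v) - f x₀)⟫)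
        (𝓝[>] (0:ℝ)) (𝓝 ⟪a, fderiv ℝ f x₀ v⟫) := by
      have h1 : Tendsto (slope (fun t : ℝ => f (x₀ + t • v)) 0) (𝓝[≠] (0:ℝ))
          (𝓝 (fderiv ℝ f x₀ v)) := hasDerivAt_iff_tendsto_slope.mp hder
      have h2 : Tendsto (slope (fun t : ℝ => f (x₀ + t • v)) 0) (𝓝[>] (0:ℝ))
          (𝓝 (fderiv ℝ f x₀ v)) :=
        h1.mono_left (nhdsWithin_mono _ fun t ht => ne_of_gt ht)
      have h3 := Filter.Tendsto.inner (𝕜 := ℝ) (tendsto_const_nhds (x := a) (f := 𝓝[>] (0:ℝ))) h2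
      refine h3.congr fun t => ?_
      simp [slope_def_module]
    have hval : ⟪a, fderiv ℝ f x₀ v⟫ = ‖v‖ ^ 2 := by
      have heq : ∀ᶠ t in 𝓝[>] (0:ℝ),
          ⟪a, t⁻¹ • (f (x₀ + t • v) - f x₀)⟫ = ‖v‖ ^ 2 := by
        filter_upwards [Ioc_mem_nhdsGT zero_lt_one] with t ht
        rw [real_inner_smul_right, hinner t ht, ← mul_assoc,
          inv_mul_cancel₀ ht.1.ne', one_mul]
      have hlim := hslope.congr' heq
      exact tendsto_nhds_unique hlim tendsto_const_nhds
    have hzero : ‖a - fderiv ℝ f x₀ v‖ ^ 2 = 0 := by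
      have n1 : ‖a‖ = ‖v‖ := by rw [ha, hv, hpres y hy x₀ hx₀]
      rw [norm_sub_sq_real, hval, hiso x₀ v, n1]
      ring
    have haL : a = fderiv ℝ f x₀ v := by
      have := pow_eq_zero_iff (n := 2) (by norm_num) |>.mp hzero
      rwa [norm_eq_zero, sub_eq_zero] at this
    rw [ha] at haL
    rw [← haL]
    abel
  -- fderiv is locally constant
  have hloc : ∀ x₀ : E, ∃ δ > 0, ∀ y ∈ ball x₀ δ, fderiv ℝ f y = fderiv ℝ f x₀ := by
    intro x₀
    obtain ⟨δ, hδ, haff⟩ := laff x₀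
    refine ⟨δ, hδ, fun y hy => ?_⟩
    have hev : f =ᶠ[𝓝 y] fun z => f x₀ + fderiv ℝ f x₀ (z - x₀) := by
      filter_upwards [isOpen_ball.mem_nhds hy] with z hz using haff z hz
    have hA : HasFDerivAt (fun z => f x₀ + fderiv ℝ f x₀ (z - x₀)) (fderiv ℝ f x₀) y := by
      have h1 : HasFDerivAt (fun z : E => f x₀ + fderiv ℝ f x₀ (z - x₀))
          ((fderiv ℝ f x₀).comp (ContinuousLinearMap.id ℝ E)) y :=
        (((fderiv ℝ f x₀).hasFDerivAt).comp y ((hasFDerivAt_id y).sub_const x₀)).const_add (f x₀)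
      rwa [ContinuousLinearMap.comp_id] at h1
    rw [hev.fderiv_eq, hA.fderiv]
  -- clopen argument: fderiv constant
  have hconst : ∀ x : E, fderiv ℝ f x = fderiv ℝ f 0 := by
    have hS : {x : E | fderiv ℝ f x = fderiv ℝ f 0} = univ := by
      apply IsClopen.eq_univ
      · constructor
        · exact isClosed_eq (hf.continuous_fderiv one_ne_zero) continuous_const
        · rw [Metric.isOpen_iff]
          intro x hx
          obtain ⟨δ, hδ, h⟩ := hloc x
          exact ⟨δ, hδ, fun y hy => by rw [Set.mem_setOf_eq, h y hy]; exact hx⟩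
      · exact ⟨0, rfl⟩
    intro x
    have : x ∈ ({x : E | fderiv ℝ f x = fderiv ℝ f 0} : Set E) := hS ▸ mem_univ x
    exact this
  -- conclude
  have hgconst : f x - fderiv ℝ f 0 x = f 0 - fderiv ℝ f 0 0 := by
    apply is_const_of_fderiv_eq_zero (𝕜 := ℝ)
      (f := fun x => f x - fderiv ℝ f 0 x)
    · exact hdiff.sub (fderiv ℝ f 0).differentiable
    · intro z
      have h1 : HasFDerivAt (fun x => f x - fderiv ℝ f 0 x)
          (fderiv ℝ f z - fderiv ℝ f 0) z :=
        (hdiff z).hasFDerivAt.sub (fderiv ℝ f 0).hasFDerivAt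
      rw [h1.fderiv, hconst z, sub_self]
  rw [map_zero, sub_zero] at hgconst
  rw [← hgconst]
  abel

/-- (Rigidity.) Let `n ≥ 1` and `f : ℝⁿ → ℝⁿ` be a `C¹` map whose
derivative at every point is a linear isometry (`‖Df(x)·v‖ = ‖v‖` for all `x, v`).
Then `f` is an affine isometry: there are a linear isometry `R` of `ℝⁿ` and `c ∈ ℝⁿ`
with `f x = R x + c` for all `x`. -/
theorem stmt16 (n : ℕ) (hn : 1 ≤ n)
    (f : EuclideanSpace ℝ (Fin n) → EuclideanSpace ℝ (Fin n))
    (hf : ContDiff ℝ 1 f)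
    (hiso : ∀ x v : EuclideanSpace ℝ (Fin n), ‖fderiv ℝ f x v‖ = ‖v‖) :
    ∃ (R : EuclideanSpace ℝ (Fin n) →ₗᵢ[ℝ] EuclideanSpace ℝ (Fin n))
      (c : EuclideanSpace ℝ (Fin n)),
      ∀ x, f x = R x + c := by
  refine ⟨⟨(fderiv ℝ f 0 : EuclideanSpace ℝ (Fin n) →ₗ[ℝ] EuclideanSpace ℝ (Fin n)),
    hiso 0⟩, f 0, fun x => ?_⟩
  show f x = fderiv ℝ f 0 x + f 0
  exact rigidity_aux hf hiso x
end

section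
/- Two first-order placements (φ̄, φᵛ, tᵛ, K, T) and (φ̄', φ'ᵛ, t'ᵛ, K', T') on Ω have the same principal tensorial invariants, i.e. on all of Ω: (φᵛ)ᵀφᵛ = (φ'ᵛ)ᵀφ'ᵛ, (φᵛ)⁻¹Dφ̄ = (φ'ᵛ)⁻¹Dφ̄', (φᵛ)⁻¹K = (φ'ᵛ)⁻¹K', (φᵛ)⁻¹T = (φ'ᵛ)⁻¹T', (φᵛ)⁻¹Dφᵛ = (φ'ᵛ)⁻¹Dφ'ᵛ and (φᵛ)⁻¹Dtᵛ = (φ'ᵛ)⁻¹Dt'ᵛ, if and only if they lie in the same orbit of the generalised Galilean group: there exist R ∈ O(3) and t̄, t₀ ∈ ℝ³ such that φ̄' = Rφ̄ + t̄, φ'ᵛ = Rφᵛ, t'ᵛ = Rtᵛ + t₀, K' = RK and T' = RT on Ω. -/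
open ContinuousLinearMap RealInnerProductSpace

set_option maxHeartbeats 1000000

private lemma const_of_hasFDerivAt_zero {E F : Type*} [NormedAddCommGroup E] [NormedSpace ℝ E]
    [NormedAddCommGroup F] [NormedSpace ℝ F] {s : Set E} (hs : IsOpen s)
    (hconn : IsPreconnected s) {f : E → F} (hf : ∀ x ∈ s, HasFDerivAt f (0 : E →L[ℝ] F) x)
    {x y : E} (hx : x ∈ s) (hy : y ∈ s) : f y = f x := by
  have hloc : ∀ z ∈ s, ∃ ε > 0, Metric.ball z ε ⊆ s ∧ ∀ w ∈ Metric.ball z ε, f w = f z := by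
    intro z hz
    obtain ⟨ε, hε, hball⟩ := Metric.isOpen_iff.1 hs z hz
    refine ⟨ε, hε, hball, fun w hw => ?_⟩
    refine (convex_ball z ε).is_const_of_fderivWithin_eq_zero
      (fun u hu => ((hf u (hball hu)).differentiableAt).differentiableWithinAt)
      (fun u hu => ?_) hw (Metric.mem_ball_self hε)
    exact (hf u (hball hu)).hasFDerivWithinAt.fderivWithin
      (Metric.isOpen_ball.uniqueDiffWithinAt hu)
  set A := {z | z ∈ s ∧ f z = f x} with hA
  set B := {z | z ∈ s ∧ f z ≠ f x} with hB
  have hAopen : IsOpen A := by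
    rw [Metric.isOpen_iff]
    rintro z ⟨hz, hfz⟩
    obtain ⟨ε, hε, hb, hc⟩ := hloc z hz
    exact ⟨ε, hε, fun w hw => ⟨hb hw, (hc w hw).trans hfz⟩⟩
  have hBopen : IsOpen B := by
    rw [Metric.isOpen_iff]
    rintro z ⟨hz, hfz⟩
    obtain ⟨ε, hε, hb, hc⟩ := hloc z hz
    exact ⟨ε, hε, fun w hw => ⟨hb hw, (hc w hw).symm ▸ hfz⟩⟩
  have hsub : s ⊆ A :=
    hconn.subset_left_of_subset_union hAopen hBopen
      (by rw [Set.disjoint_left]; rintro a ⟨_, h1⟩ ⟨_, h2⟩; exact h2 h1)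
      (fun z hz => by by_cases h : f z = f x
                      · exact Or.inl ⟨hz, h⟩
                      · exact Or.inr ⟨hz, h⟩)
      ⟨x, hx, hx, rfl⟩
  exact (hsub hy).2



/-- (Orbital invariants of the generalised Galilean group, holonomic
coordinates.) Two first-order placements `(φ̄, φᵛ, tᵛ, K, T)` and `(φ̄', φ'ᵛ, t'ᵛ, K', T')`
on a nonempty open connected `Ω ⊆ ℝⁿ` (with `ψ, ψ'` the pointwise inverses of the
invertible micro-placements `φᵛ, φ'ᵛ`) have the same principal tensorial invariants
(micro-metric `(φᵛ)ᵀφᵛ`, solder `(φᵛ)⁻¹Dφ̄`, connection `((φᵛ)⁻¹K, (φᵛ)⁻¹T)` and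
holonomic connection `((φᵛ)⁻¹Dφᵛ, (φᵛ)⁻¹Dtᵛ)`) if and only if they lie in the same
orbit of the generalised Galilean group: there are `R ∈ O(3)` and `t̄, t₀ ∈ ℝ³` with
`φ̄' = Rφ̄ + t̄`, `φ'ᵛ = Rφᵛ`, `t'ᵛ = Rtᵛ + t₀`, `K' = RK`, `T' = RT` on `Ω`. -/
theorem stmt17 (n : ℕ) (hn : 1 ≤ n)
    (Ω : Set (EuclideanSpace ℝ (Fin n)))
    (hΩopen : IsOpen Ω) (hΩconn : IsConnected Ω)
    (φb φb' : EuclideanSpace ℝ (Fin n) → E3)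
    (φv φv' ψ ψ' : EuclideanSpace ℝ (Fin n) → (E3 →L[ℝ] E3))
    (tv tv' : EuclideanSpace ℝ (Fin n) → E3)
    (K K' : EuclideanSpace ℝ (Fin n) → (E3 →L[ℝ] EuclideanSpace ℝ (Fin n) →L[ℝ] E3))
    (T T' : EuclideanSpace ℝ (Fin n) → (EuclideanSpace ℝ (Fin n) →L[ℝ] E3))
    (hφb : ContDiffOn ℝ 1 φb Ω) (hφb' : ContDiffOn ℝ 1 φb' Ω)
    (hφv : ContDiffOn ℝ 1 φv Ω) (hφv' : ContDiffOn ℝ 1 φv' Ω)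
    (htv : ContDiffOn ℝ 1 tv Ω) (htv' : ContDiffOn ℝ 1 tv' Ω)
    (hψ : ∀ X ∈ Ω, ψ X ∘L φv X = ContinuousLinearMap.id ℝ E3 ∧
      φv X ∘L ψ X = ContinuousLinearMap.id ℝ E3)
    (hψ' : ∀ X ∈ Ω, ψ' X ∘L φv' X = ContinuousLinearMap.id ℝ E3 ∧
      φv' X ∘L ψ' X = ContinuousLinearMap.id ℝ E3) :
    -- equality of the principal tensorial invariants on Ω …
    ((∀ X ∈ Ω, ContinuousLinearMap.adjoint (φv X) ∘L φv X =
        ContinuousLinearMap.adjoint (φv' X) ∘L φv' X) ∧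
     (∀ X ∈ Ω, ∀ δ, ψ X (fderiv ℝ φb X δ) = ψ' X (fderiv ℝ φb' X δ)) ∧
     (∀ X ∈ Ω, ∀ y δ, ψ X ((K X y) δ) = ψ' X ((K' X y) δ)) ∧
     (∀ X ∈ Ω, ∀ δ, ψ X (T X δ) = ψ' X (T' X δ)) ∧
     (∀ X ∈ Ω, ∀ δ y, ψ X ((fderiv ℝ φv X δ) y) = ψ' X ((fderiv ℝ φv' X δ) y)) ∧
     (∀ X ∈ Ω, ∀ δ, ψ X (fderiv ℝ tv X δ) = ψ' X (fderiv ℝ tv' X δ)))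
    ↔
    -- … if and only if a single generalised Galilean transformation relates the placements
    (∃ (R : E3 ≃ₗᵢ[ℝ] E3) (tb t0 : E3),
      ∀ X ∈ Ω,
        φb' X = R (φb X) + tb ∧
        (∀ y, φv' X y = R (φv X y)) ∧
        tv' X = R (tv X) + t0 ∧
        (∀ y δ, (K' X y) δ = R ((K X y) δ)) ∧
        (∀ δ, T' X δ = R (T X δ))) := by
  obtain ⟨X₀, hX₀⟩ := hΩconn.nonempty
  have hψφ : ∀ X ∈ Ω, ∀ v, ψ X (φv X v) = v := by
    intro X hX v
    have := congrArg (fun (L : E3 →L[ℝ] E3) => L v) (hψ X hX).1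
    simpa using this
  have hφψ : ∀ X ∈ Ω, ∀ v, φv X (ψ X v) = v := by
    intro X hX v
    have := congrArg (fun (L : E3 →L[ℝ] E3) => L v) (hψ X hX).2
    simpa using this
  have hψφ' : ∀ X ∈ Ω, ∀ v, ψ' X (φv' X v) = v := by
    intro X hX v
    have := congrArg (fun (L : E3 →L[ℝ] E3) => L v) (hψ' X hX).1
    simpa using this
  have hφψ' : ∀ X ∈ Ω, ∀ v, φv' X (ψ' X v) = v := by
    intro X hX v
    have := congrArg (fun (L : E3 →L[ℝ] E3) => L v) (hψ' X hX).2
    simpa using this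
  have hdφv : ∀ X ∈ Ω, HasFDerivAt φv (fderiv ℝ φv X) X := fun X hX =>
    ((hφv.contDiffAt (hΩopen.mem_nhds hX)).differentiableAt one_ne_zero).hasFDerivAt
  have hdφv' : ∀ X ∈ Ω, HasFDerivAt φv' (fderiv ℝ φv' X) X := fun X hX =>
    ((hφv'.contDiffAt (hΩopen.mem_nhds hX)).differentiableAt one_ne_zero).hasFDerivAt
  have hdφb : ∀ X ∈ Ω, HasFDerivAt φb (fderiv ℝ φb X) X := fun X hX =>
    ((hφb.contDiffAt (hΩopen.mem_nhds hX)).differentiableAt one_ne_zero).hasFDerivAt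
  have hdφb' : ∀ X ∈ Ω, HasFDerivAt φb' (fderiv ℝ φb' X) X := fun X hX =>
    ((hφb'.contDiffAt (hΩopen.mem_nhds hX)).differentiableAt one_ne_zero).hasFDerivAt
  have hdtv : ∀ X ∈ Ω, HasFDerivAt tv (fderiv ℝ tv X) X := fun X hX =>
    ((htv.contDiffAt (hΩopen.mem_nhds hX)).differentiableAt one_ne_zero).hasFDerivAt
  have hdtv' : ∀ X ∈ Ω, HasFDerivAt tv' (fderiv ℝ tv' X) X := fun X hX =>
    ((htv'.contDiffAt (hΩopen.mem_nhds hX)).differentiableAt one_ne_zero).hasFDerivAt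
  constructor
  · rintro ⟨hmet, hsol, hKi, hTi, hc5, hc6⟩
    set G : EuclideanSpace ℝ (Fin n) → (E3 →L[ℝ] E3) :=
      fun Y => φv' Y * Ring.inverse (φv Y) with hGdef
    have hGeq : ∀ X ∈ Ω, ∀ v, G X v = φv' X (ψ X v) := by
      intro X hX v
      set u : (E3 →L[ℝ] E3)ˣ := ⟨φv X, ψ X, (hψ X hX).2, (hψ X hX).1⟩ with hu
      have hinv : ((u⁻¹ : (E3 →L[ℝ] E3)ˣ) : E3 →L[ℝ] E3) = ψ X := rfl
      have hq : Ring.inverse (φv X) = ψ X := by rw [← hinv]; exact Ring.inverse_unit u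
      simp [hGdef, ContinuousLinearMap.mul_apply, hq]
    have hGd : ∀ X ∈ Ω, HasFDerivAt G
        (0 : (EuclideanSpace ℝ (Fin n)) →L[ℝ] (E3 →L[ℝ] E3)) X := by
      intro X hX
      set u : (E3 →L[ℝ] E3)ˣ := ⟨φv X, ψ X, (hψ X hX).2, (hψ X hX).1⟩ with hu
      have hBinv := (hasFDerivAt_ringInverse (𝕜 := ℝ) u).comp X (hdφv X hX)
      have h2 := (hdφv' X hX).mul' hBinv
      have hkey : ∀ δ, fderiv ℝ φv' X δ = φv' X * (ψ X * fderiv ℝ φv X δ) := by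
        intro δ
        refine ContinuousLinearMap.ext fun y => ?_
        have h3 := hc5 X hX δ y
        calc fderiv ℝ φv' X δ y = φv' X (ψ' X (fderiv ℝ φv' X δ y)) := (hφψ' X hX _).symm
          _ = φv' X (ψ X (fderiv ℝ φv X δ y)) := by rw [h3]
          _ = (φv' X * (ψ X * fderiv ℝ φv X δ)) y := by
              simp [ContinuousLinearMap.mul_apply]
      refine h2.congr_fderiv ?_
      refine ContinuousLinearMap.ext fun δ => ?_
      have hinv : ((u⁻¹ : (E3 →L[ℝ] E3)ˣ) : E3 →L[ℝ] E3) = ψ X := rfl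
      have hq : Ring.inverse (φv X) = ψ X := by rw [← hinv]; exact Ring.inverse_unit u
      simp only [ContinuousLinearMap.add_apply, ContinuousLinearMap.smul_apply,
        ContinuousLinearMap.smulRight_apply, ContinuousLinearMap.comp_apply,
        ContinuousLinearMap.neg_apply, mulLeftRight_apply, hinv, hq, smul_eq_mul,
        ContinuousLinearMap.zero_apply, Function.comp_apply, hkey δ]
      simp only [mul_assoc]
      refine ContinuousLinearMap.ext fun y => ?_
      simp only [ContinuousLinearMap.add_apply, ContinuousLinearMap.mul_apply,
        ContinuousLinearMap.neg_apply, ContinuousLinearMap.zero_apply, map_neg]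
      exact neg_add_cancel _
    have hGc : ∀ X ∈ Ω, G X = G X₀ := fun X hX =>
      const_of_hasFDerivAt_zero hΩopen hΩconn.isPreconnected hGd hX₀ hX
    -- G X₀ preserves the inner product
    have hip : ∀ a b : E3, ⟪φv' X₀ a, φv' X₀ b⟫ = ⟪φv X₀ a, φv X₀ b⟫ := by
      intro a b
      have e1 : ⟪φv' X₀ a, φv' X₀ b⟫ =
          ⟪(ContinuousLinearMap.adjoint (φv' X₀) ∘L φv' X₀) a, b⟫ := by
        rw [ContinuousLinearMap.comp_apply, ContinuousLinearMap.adjoint_inner_left]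
      have e2 : ⟪φv X₀ a, φv X₀ b⟫ =
          ⟪(ContinuousLinearMap.adjoint (φv X₀) ∘L φv X₀) a, b⟫ := by
        rw [ContinuousLinearMap.comp_apply, ContinuousLinearMap.adjoint_inner_left]
      rw [e1, e2, hmet X₀ hX₀]
    have hinner : ∀ v w : E3, ⟪(G X₀ : E3 →ₗ[ℝ] E3) v, (G X₀ : E3 →ₗ[ℝ] E3) w⟫ = ⟪v, w⟫ := by
      intro v w
      show ⟪G X₀ v, G X₀ w⟫ = ⟪v, w⟫
      rw [hGeq X₀ hX₀ v, hGeq X₀ hX₀ w, hip, hφψ X₀ hX₀ v, hφψ X₀ hX₀ w]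
    set Rli : E3 →ₗᵢ[ℝ] E3 := LinearMap.isometryOfInner (G X₀ : E3 →ₗ[ℝ] E3) hinner with hRli
    set R : E3 ≃ₗᵢ[ℝ] E3 := Rli.toLinearIsometryEquiv rfl with hRdef
    have hRapp : ∀ v, R v = G X₀ v := by
      intro v
      rw [hRdef, LinearIsometry.toLinearIsometryEquiv_apply, hRli]
      simp [LinearMap.coe_isometryOfInner]
    -- macroscopic translation
    set fb : EuclideanSpace ℝ (Fin n) → E3 := fun Y => φb' Y - G X₀ (φb Y) with hfbdef
    have hder_b : ∀ X ∈ Ω, ∀ δ, fderiv ℝ φb' X δ = G X₀ (fderiv ℝ φb X δ) := by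
      intro X hX δ
      rw [← hGc X hX, hGeq X hX]
      calc fderiv ℝ φb' X δ = φv' X (ψ' X (fderiv ℝ φb' X δ)) := (hφψ' X hX _).symm
        _ = φv' X (ψ X (fderiv ℝ φb X δ)) := by rw [← hsol X hX δ]
    have hfbd : ∀ X ∈ Ω, HasFDerivAt fb
        (0 : (EuclideanSpace ℝ (Fin n)) →L[ℝ] E3) X := by
      intro X hX
      have h := (hdφb' X hX).sub ((G X₀).hasFDerivAt.comp X (hdφb X hX))
      refine h.congr_fderiv ?_
      refine ContinuousLinearMap.ext fun δ => ?_
      simp only [ContinuousLinearMap.sub_apply, ContinuousLinearMap.comp_apply,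
        ContinuousLinearMap.zero_apply]
      rw [hder_b X hX δ, sub_self]
    have hfbc : ∀ X ∈ Ω, fb X = fb X₀ := fun X hX =>
      const_of_hasFDerivAt_zero hΩopen hΩconn.isPreconnected hfbd hX₀ hX
    -- microscopic translation
    set ftv : EuclideanSpace ℝ (Fin n) → E3 := fun Y => tv' Y - G X₀ (tv Y) with hftvdef
    have hder_t : ∀ X ∈ Ω, ∀ δ, fderiv ℝ tv' X δ = G X₀ (fderiv ℝ tv X δ) := by
      intro X hX δ
      rw [← hGc X hX, hGeq X hX]
      calc fderiv ℝ tv' X δ = φv' X (ψ' X (fderiv ℝ tv' X δ)) := (hφψ' X hX _).symm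
        _ = φv' X (ψ X (fderiv ℝ tv X δ)) := by rw [← hc6 X hX δ]
    have hftvd : ∀ X ∈ Ω, HasFDerivAt ftv
        (0 : (EuclideanSpace ℝ (Fin n)) →L[ℝ] E3) X := by
      intro X hX
      have h := (hdtv' X hX).sub ((G X₀).hasFDerivAt.comp X (hdtv X hX))
      refine h.congr_fderiv ?_
      refine ContinuousLinearMap.ext fun δ => ?_
      simp only [ContinuousLinearMap.sub_apply, ContinuousLinearMap.comp_apply,
        ContinuousLinearMap.zero_apply]
      rw [hder_t X hX δ, sub_self]
    have hftvc : ∀ X ∈ Ω, ftv X = ftv X₀ := fun X hX =>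
      const_of_hasFDerivAt_zero hΩopen hΩconn.isPreconnected hftvd hX₀ hX
    refine ⟨R, fb X₀, ftv X₀, fun X hX => ⟨?_, ?_, ?_, ?_, ?_⟩⟩
    · rw [hRapp, ← hfbc X hX]
      show φb' X = (G X₀) (φb X) + (φb' X - (G X₀) (φb X))
      abel
    · intro y
      rw [hRapp, ← hGc X hX, hGeq X hX, hψφ X hX]
    · rw [hRapp, ← hftvc X hX]
      show tv' X = (G X₀) (tv X) + (tv' X - (G X₀) (tv X))
      abel
    · intro y δ
      rw [hRapp, ← hGc X hX, hGeq X hX]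
      calc K' X y δ = φv' X (ψ' X (K' X y δ)) := (hφψ' X hX _).symm
        _ = φv' X (ψ X (K X y δ)) := by rw [← hKi X hX y δ]
    · intro δ
      rw [hRapp, ← hGc X hX, hGeq X hX]
      calc T' X δ = φv' X (ψ' X (T' X δ)) := (hφψ' X hX _).symm
        _ = φv' X (ψ X (T X δ)) := by rw [← hTi X hX δ]
  · rintro ⟨R, tb, t0, h⟩
    set Rcl : E3 →L[ℝ] E3 := (R.toContinuousLinearEquiv : E3 ≃L[ℝ] E3).toContinuousLinearMap
      with hRcl
    have hRclapp : ∀ v, Rcl v = R v := fun v => rfl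
    have hRψ : ∀ X ∈ Ω, ∀ v, ψ' X (R v) = ψ X v := by
      intro X hX v
      have h2 := (h X hX).2.1 (ψ X v)
      rw [hφψ X hX v] at h2
      rw [← h2, hψφ' X hX]
    refine ⟨fun X hX => ?_, fun X hX δ => ?_, fun X hX y δ => ?_, fun X hX δ => ?_,
      fun X hX δ y => ?_, fun X hX δ => ?_⟩
    · refine ContinuousLinearMap.ext fun a => ?_
      refine ext_inner_right ℝ fun b => ?_
      rw [ContinuousLinearMap.comp_apply, ContinuousLinearMap.comp_apply,
        ContinuousLinearMap.adjoint_inner_left, ContinuousLinearMap.adjoint_inner_left,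
        (h X hX).2.1 a, (h X hX).2.1 b, LinearIsometryEquiv.inner_map_map]
    · -- solder
      have hB : HasFDerivAt φb' (Rcl ∘L fderiv ℝ φb X) X := by
        have h1 : HasFDerivAt (fun Y => Rcl (φb Y) + tb) (Rcl ∘L fderiv ℝ φb X) X :=
          (Rcl.hasFDerivAt.comp X (hdφb X hX)).add_const tb
        refine h1.congr_of_eventuallyEq ?_
        filter_upwards [hΩopen.mem_nhds hX] with Y hY
        rw [(h Y hY).1, hRclapp]
      rw [hB.fderiv, ContinuousLinearMap.comp_apply, hRclapp, hRψ X hX]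
    · -- K
      rw [(h X hX).2.2.2.1 y δ, hRψ X hX]
    · -- T
      rw [(h X hX).2.2.2.2 δ, hRψ X hX]
    · -- holonomic connection, φv part
      have hB : HasFDerivAt φv'
          ((ContinuousLinearMap.compL ℝ E3 E3 E3 Rcl) ∘L fderiv ℝ φv X) X := by
        have h1 : HasFDerivAt (fun Y => (ContinuousLinearMap.compL ℝ E3 E3 E3 Rcl) (φv Y))
            ((ContinuousLinearMap.compL ℝ E3 E3 E3 Rcl) ∘L fderiv ℝ φv X) X :=
          (ContinuousLinearMap.compL ℝ E3 E3 E3 Rcl).hasFDerivAt.comp X (hdφv X hX)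
        refine h1.congr_of_eventuallyEq ?_
        filter_upwards [hΩopen.mem_nhds hX] with Y hY
        refine ContinuousLinearMap.ext fun y => ?_
        rw [(h Y hY).2.1 y]
        simp [ContinuousLinearMap.compL_apply, hRclapp]
      rw [hB.fderiv]
      simp only [ContinuousLinearMap.comp_apply, ContinuousLinearMap.compL_apply]
      rw [hRclapp, hRψ X hX]
    · -- tv
      have hB : HasFDerivAt tv' (Rcl ∘L fderiv ℝ tv X) X := by
        have h1 : HasFDerivAt (fun Y => Rcl (tv Y) + t0) (Rcl ∘L fderiv ℝ tv X) X :=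
          (Rcl.hasFDerivAt.comp X (hdtv X hX)).add_const t0
        refine h1.congr_of_eventuallyEq ?_
        filter_upwards [hΩopen.mem_nhds hX] with Y hY
        rw [(h Y hY).2.2.1, hRclapp]
      rw [hB.fderiv, ContinuousLinearMap.comp_apply, hRclapp, hRψ X hX]
end

section
/- The principal tensorial invariants are strongly minimal: let (φ̄, φᵛ, tᵛ, K, T) be a first-order placement on Ω such that Dφ̄ is not identically zero. Then for each of the four invariants there exists another first-order placement on Ω agreeing with the given one on the other three invariants but differing on that one. Explicitly: (i) the scaled placement (2φ̄, 2φᵛ, 2tᵛ, 2K, 2T) has the same solder, connection and holonomic-connection invariants but micro-metric 4·(φᵛ)ᵀφᵛ ≠ (φᵛ)ᵀφᵛ; (ii) there exists R ∈ O(3) such that (Rφ̄, φᵛ, tᵛ, K, T) changes only the solder invariant; (iii) for every nonzero constant S ∈ Hom(ℝⁿ, ℝ³), replacing T by T + φᵛ∘S changes only the connection invariant; (iv) there exists a non-constant affine map s : Ω → ℝ³ such that replacing tᵛ by tᵛ + s changes only the holonomic-connection invariant. -/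
open ContinuousLinearMap in
lemma adj_smul (c : ℝ) (A : E3 →L[ℝ] E3) :
    ContinuousLinearMap.adjoint (c • A) = c • ContinuousLinearMap.adjoint A := by
  ext v
  apply ext_inner_right ℝ
  intro w
  simp [ContinuousLinearMap.adjoint_inner_left, inner_smul_left, inner_smul_right]

lemma e3_single_ne_zero : (EuclideanSpace.single (0 : Fin 3) (1 : ℝ) : E3) ≠ 0 := by
  intro h
  have := congrArg (fun v : E3 => v 0) h
  simp [EuclideanSpace.single_apply] at this

/-- (Strong minimality of the principal tensorial invariants, holonomic
coordinates.) Let `(φ̄, φᵛ, tᵛ, K, T)` be a first-order placement on a nonempty open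
connected `Ω ⊆ ℝⁿ` (with `ψ` the pointwise inverse of `φᵛ`) such that `Dφ̄` is not
identically zero on `Ω`. Then each of the four principal invariants can be changed while
keeping the other three:
(i) scaling by `2` keeps the solder, connection and holonomic-connection invariants and
multiplies the micro-metric by `4 ≠ 1`;
(ii) some `R ∈ O(3)` changes only the solder invariant;
(iii) for every nonzero constant `S ∈ Hom(ℝⁿ, ℝ³)`, replacing `T` by `T + φᵛ ∘ S` shifts
the connection invariant by `S` (hence changes it) and nothing else;
(iv) some non-constant affine map `s(x) = Lx + c` makes `tᵛ + s` differ from `tᵛ` in the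
holonomic-connection invariant only. -/
theorem stmt18 (n : ℕ) (hn : 1 ≤ n)
    (Ω : Set (EuclideanSpace ℝ (Fin n)))
    (hΩopen : IsOpen Ω) (hΩconn : IsConnected Ω)
    (φb : EuclideanSpace ℝ (Fin n) → E3)
    (φv ψ : EuclideanSpace ℝ (Fin n) → (E3 →L[ℝ] E3))
    (tv : EuclideanSpace ℝ (Fin n) → E3)
    (K : EuclideanSpace ℝ (Fin n) → (E3 →L[ℝ] EuclideanSpace ℝ (Fin n) →L[ℝ] E3))
    (T : EuclideanSpace ℝ (Fin n) → (EuclideanSpace ℝ (Fin n) →L[ℝ] E3))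
    (hφb : ContDiffOn ℝ 1 φb Ω)
    (hφv : ContDiffOn ℝ 1 φv Ω)
    (htv : ContDiffOn ℝ 1 tv Ω)
    (hψ : ∀ X ∈ Ω, ψ X ∘L φv X = ContinuousLinearMap.id ℝ E3 ∧
      φv X ∘L ψ X = ContinuousLinearMap.id ℝ E3)
    (hDφb : ∃ X ∈ Ω, fderiv ℝ φb X ≠ 0) :
    -- (i) the uniformly dilated placement `(2φ̄, 2φᵛ, 2tᵛ, 2K, 2T)`, whose micro-inverse
    -- is `2⁻¹ψ`, keeps the solder, connection and holonomic-connection invariants but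
    -- changes the micro-metric
    ((∀ X ∈ Ω, ContinuousLinearMap.adjoint ((2 : ℝ) • φv X) ∘L ((2 : ℝ) • φv X) =
        (4 : ℝ) • (ContinuousLinearMap.adjoint (φv X) ∘L φv X)) ∧
     (∃ X ∈ Ω, (4 : ℝ) • (ContinuousLinearMap.adjoint (φv X) ∘L φv X) ≠
        ContinuousLinearMap.adjoint (φv X) ∘L φv X) ∧
     (∀ X ∈ Ω, ∀ δ, ((2 : ℝ)⁻¹ • ψ X) (fderiv ℝ (fun x => (2 : ℝ) • φb x) X δ) =
        ψ X (fderiv ℝ φb X δ)) ∧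
     (∀ X ∈ Ω, ∀ y δ, ((2 : ℝ)⁻¹ • ψ X) ((((2 : ℝ) • K X) y) δ) = ψ X ((K X y) δ)) ∧
     (∀ X ∈ Ω, ∀ δ, ((2 : ℝ)⁻¹ • ψ X) (((2 : ℝ) • T X) δ) = ψ X (T X δ)) ∧
     (∀ X ∈ Ω, ∀ δ y, ((2 : ℝ)⁻¹ • ψ X) ((fderiv ℝ (fun x => (2 : ℝ) • φv x) X δ) y) =
        ψ X ((fderiv ℝ φv X δ) y)) ∧
     (∀ X ∈ Ω, ∀ δ, ((2 : ℝ)⁻¹ • ψ X) (fderiv ℝ (fun x => (2 : ℝ) • tv x) X δ) =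
        ψ X (fderiv ℝ tv X δ)))
    ∧
    -- (ii) a purely macroscopic rotation `φ̄ ↦ R ∘ φ̄` (leaving `φᵛ, tᵛ, K, T`, hence the
    -- micro-metric, connection and holonomic-connection invariants, untouched) changes
    -- the solder invariant
    (∃ R : E3 ≃ₗᵢ[ℝ] E3, ∃ X ∈ Ω, ∃ δ,
      ψ X (fderiv ℝ (fun x => (R (φb x) : E3)) X δ) ≠ ψ X (fderiv ℝ φb X δ))
    ∧
    -- (iii) replacing `T` by `T + φᵛ ∘ S` with `S ≠ 0` constant (leaving `φ̄, φᵛ, tᵛ, K`,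
    -- hence all other invariants, untouched) shifts the connection invariant by `S`,
    -- hence changes it
    (∀ S : EuclideanSpace ℝ (Fin n) →L[ℝ] E3, S ≠ 0 →
      (∀ X ∈ Ω, ∀ δ, ψ X ((T X + φv X ∘L S) δ) = ψ X (T X δ) + S δ) ∧
      (∃ X ∈ Ω, ∃ δ, ψ X ((T X + φv X ∘L S) δ) ≠ ψ X (T X δ)))
    ∧
    -- (iv) a non-constant affine microscopic translation `s(x) = L x + c` added to `tᵛ`
    -- (leaving `φ̄, φᵛ, K, T`, hence all other invariants, untouched) changes the
    -- holonomic-connection invariant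
    (∃ (L : EuclideanSpace ℝ (Fin n) →L[ℝ] E3) (c : E3), L ≠ 0 ∧
      ∃ X ∈ Ω, ∃ δ,
        ψ X (fderiv ℝ (fun x => tv x + (L x + c)) X δ) ≠ ψ X (fderiv ℝ tv X δ)) := by
  obtain ⟨X₁, hX₁, hD⟩ := hDφb
  -- basic facts about ψ
  have hφvψ : ∀ X ∈ Ω, ∀ v : E3, ψ X (φv X v) = v := by
    intro X hX v
    have h := congrArg (fun A : E3 →L[ℝ] E3 => A v) (hψ X hX).1
    simpa using h
  have hψφv : ∀ X ∈ Ω, ∀ v : E3, φv X (ψ X v) = v := by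
    intro X hX v
    have h := congrArg (fun A : E3 →L[ℝ] E3 => A v) (hψ X hX).2
    simpa using h
  have hψinj : ∀ X ∈ Ω, ∀ v : E3, ψ X v = 0 → v = 0 := by
    intro X hX v hv
    have := hψφv X hX v
    rw [hv] at this
    simpa using this.symm
  refine ⟨⟨?_, ?_, ?_, ?_, ?_, ?_, ?_⟩, ?_, ?_, ?_⟩
  · -- (i) metric equality
    intro X hX
    rw [adj_smul, ContinuousLinearMap.smul_comp, ContinuousLinearMap.comp_smul, smul_smul]
    norm_num
  · -- (i) metric changes
    refine ⟨X₁, hX₁, fun hEq => ?_⟩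
    set A := ContinuousLinearMap.adjoint (φv X₁) ∘L φv X₁ with hAdef
    have h3 : (3 : ℝ) • A = 0 := by
      have h4 : (4 : ℝ) • A - A = 0 := sub_eq_zero.mpr hEq
      have : (3 : ℝ) • A = (4 : ℝ) • A - A := by module
      rw [this, h4]
    have hA : A = 0 := by
      rcases smul_eq_zero.mp h3 with h | h
      · norm_num at h
      · exact h
    set e : E3 := EuclideanSpace.single (0 : Fin 3) (1 : ℝ) with hedef
    have hinner : (inner ℝ (φv X₁ e) (φv X₁ e) : ℝ) = 0 := by
      have h1 : (inner ℝ e (A e) : ℝ) = inner ℝ (φv X₁ e) (φv X₁ e) := by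
        simp [hAdef, ContinuousLinearMap.comp_apply,
          ContinuousLinearMap.adjoint_inner_right]
      rw [← h1, hA]
      simp
    have hφe : φv X₁ e = 0 := inner_self_eq_zero.mp hinner
    have he0 : e = 0 := by
      have := hφvψ X₁ hX₁ e
      rw [hφe] at this
      simpa using this.symm
    exact e3_single_ne_zero he0
  · -- (i) solder invariant
    intro X hX δ
    have hd : DifferentiableAt ℝ φb X :=
      (hφb.differentiableOn one_ne_zero).differentiableAt (hΩopen.mem_nhds hX)
    rw [fderiv_fun_const_smul hd]
    simp [smul_smul]
  · -- (i) K invariant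
    intro X hX y δ
    simp [smul_smul]
  · -- (i) T invariant
    intro X hX δ
    simp [smul_smul]
  · -- (i) φv holonomic-connection invariant
    intro X hX δ y
    have hd : DifferentiableAt ℝ φv X :=
      (hφv.differentiableOn one_ne_zero).differentiableAt (hΩopen.mem_nhds hX)
    rw [fderiv_fun_const_smul hd]
    simp [smul_smul]
  · -- (i) tv holonomic-connection invariant
    intro X hX δ
    have hd : DifferentiableAt ℝ tv X :=
      (htv.differentiableOn one_ne_zero).differentiableAt (hΩopen.mem_nhds hX)
    rw [fderiv_fun_const_smul hd]
    simp [smul_smul]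
  · -- (ii) solder changes
    refine ⟨(LinearIsometryEquiv.neg ℝ : E3 ≃ₗᵢ[ℝ] E3), X₁, hX₁, ?_⟩
    obtain ⟨δ, hδ⟩ : ∃ δ, fderiv ℝ φb X₁ δ ≠ 0 := by
      by_contra h
      push_neg at h
      exact hD (ContinuousLinearMap.ext h)
    refine ⟨δ, fun hEq => ?_⟩
    have hneg : fderiv ℝ
        (fun x => (((LinearIsometryEquiv.neg ℝ : E3 ≃ₗᵢ[ℝ] E3)) (φb x) : E3)) X₁ =
        -fderiv ℝ φb X₁ := by
      show fderiv ℝ (fun x => -(φb x)) X₁ = -fderiv ℝ φb X₁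
      exact fderiv_neg
    rw [hneg, ContinuousLinearMap.neg_apply, map_neg] at hEq
    set a := ψ X₁ (fderiv ℝ φb X₁ δ) with hadef
    have ha0 : a = 0 := by
      have h2 : a + a = 0 := by
        nth_rewrite 1 [← hEq]
        exact neg_add_cancel a
      have : (2 : ℝ) • a = 0 := by rw [two_smul]; exact h2
      rcases smul_eq_zero.mp this with h | h
      · norm_num at h
      · exact h
    exact hδ (hψinj X₁ hX₁ _ ha0)
  · -- (iii) connection shift
    intro S hS
    have hshift : ∀ X ∈ Ω, ∀ δ, ψ X ((T X + φv X ∘L S) δ) = ψ X (T X δ) + S δ := by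
      intro X hX δ
      simp only [ContinuousLinearMap.add_apply, ContinuousLinearMap.comp_apply, map_add]
      rw [hφvψ X hX]
    refine ⟨hshift, ?_⟩
    obtain ⟨δ, hδ⟩ : ∃ δ, S δ ≠ 0 := by
      by_contra h
      push_neg at h
      exact hS (ContinuousLinearMap.ext h)
    refine ⟨X₁, hX₁, δ, fun hEq => ?_⟩
    rw [hshift X₁ hX₁ δ] at hEq
    exact hδ (add_eq_left.mp hEq)
  · -- (iv) holonomic-connection changes
    set e : E3 := EuclideanSpace.single (0 : Fin 3) (1 : ℝ) with hedef
    set i : Fin n := ⟨0, hn⟩ with hidef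
    set L : EuclideanSpace ℝ (Fin n) →L[ℝ] E3 :=
      (EuclideanSpace.proj i).smulRight e with hLdef
    set δ : EuclideanSpace ℝ (Fin n) := EuclideanSpace.single i (1 : ℝ) with hδdef
    have hLδ : L δ = e := by
      simp [hLdef, hδdef, ContinuousLinearMap.smulRight_apply, PiLp.proj_apply,
        EuclideanSpace.single_apply]
    have hL0 : L ≠ 0 := by
      intro h
      have := congrArg (fun A : EuclideanSpace ℝ (Fin n) →L[ℝ] E3 => A δ) h
      simp only [hLδ, ContinuousLinearMap.zero_apply] at this
      exact e3_single_ne_zero this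
    refine ⟨L, 0, hL0, X₁, hX₁, δ, fun hEq => ?_⟩
    have hd : DifferentiableAt ℝ tv X₁ :=
      (htv.differentiableOn one_ne_zero).differentiableAt (hΩopen.mem_nhds hX₁)
    have hfd : fderiv ℝ (fun x => tv x + (L x + (0 : E3))) X₁ = fderiv ℝ tv X₁ + L := by
      have : (fun x => tv x + (L x + (0 : E3))) = fun x => tv x + L x := by
        funext x; rw [add_zero]
      rw [this, fderiv_fun_add hd L.differentiableAt]
      rw [L.fderiv]
    rw [hfd, ContinuousLinearMap.add_apply, map_add, hLδ] at hEq
    exact e3_single_ne_zero (hψinj X₁ hX₁ e (add_eq_left.mp hEq))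
end
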